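/- arXiv:2512.24587 — 5 statements merged into one kernel-verified Lean document; each statement's English description precedes it below -/
import Mathlib

section
/- (Improved near-optimality for discrete scores.) Under the stated conditions (i.i.d. datapoints, feasibility, bounded constraint and objective costs, every score with finite support, non-degenerate risk levels for all indices, and λ_j^{*,(2)} ∈ (λ_j^min, λ_j^max) for all j), there exist a constant C > 0 and an integer N such that for all n ≥ N and any minimizer λ*_{1:m} of the population problem, the MULTIRISK thresholds λ̂_1^{(2)}(n),…,λ̂_m^{(2)}(n) computed from the first n datapoints satisfy E[V_{m+1}·1{S_1 ≤ λ̂_1^{(2)}(n),…,S_m ≤ λ̂_m^{(2)}(n)}] ≤ E[V_{m+1}·1{S_1 ≤ λ*_1,…,S_m ≤ λ*_m}] + C·exp(−n^{0.99}), where (S_1,…,S_m,V_{m+1}) denotes a fresh test datapoint independent of the first n datapoints. -/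
open MeasureTheory Set

attribute [local instance] Classical.propDecidable

noncomputable section

/-- The loss `L_j^{(i)}(λ_{1:j}) = V_j^{(i)} · 1{S_1^{(i)} ≤ λ_1, …, S_{j−1}^{(i)} ≤ λ_{j−1},
S_j^{(i)} > λ_j}` for an infinite i.i.d. sequence of datapoints indexed by `i : ℕ` (so the paper's
datapoint `i` is index `i − 1` here).  Only the coordinates `ℓ ≤ j` of `lam` are read. -/
def lossSeq {Ω : Type*} {m : ℕ} (S V : ℕ → Fin m → Ω → ℝ)
    (j : Fin m) (i : ℕ) (lam : Fin m → ℝ) (ω : Ω) : ℝ :=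
  V i j ω * (if (∀ l, l < j → S i l ω ≤ lam l) ∧ lam j < S i j ω then 1 else 0)

/-- The population risk `g_j^*(λ_j; λ_{1:(j−1)}) = E[L_j^{(1)}(λ_{1:j})]`. -/
def gStarSeq {Ω : Type*} [MeasurableSpace Ω] {m : ℕ} (μ : Measure Ω)
    (S V : ℕ → Fin m → Ω → ℝ) (j : Fin m) (lam : Fin m → ℝ) : ℝ :=
  ∫ ω, lossSeq S V j 0 lam ω ∂μ

/-- `U_j^*(λ_{1:(j−1)}; b) = sup{x ∈ Λ_j : g_j^*(x; λ_{1:(j−1)}) > b}`, the supremum of the empty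
set being `λ_j^min`. -/
def UStarSeq {Ω : Type*} [MeasurableSpace Ω] {m : ℕ} (μ : Measure Ω)
    (S V : ℕ → Fin m → Ω → ℝ) (lamMin lamMax : Fin m → ℝ)
    (j : Fin m) (lam : Fin m → ℝ) (b : ℝ) : ℝ :=
  sSup (insert (lamMin j)
    {x | x ∈ Icc (lamMin j) (lamMax j) ∧ b < gStarSeq μ S V j (Function.update lam j x)})

/-- The recursively defined population thresholds `λ_1^{*,(2)} = U_1^*(β_1)`,
`λ_j^{*,(2)} = U_j^*(λ_1^{*,(2)},…,λ_{j−1}^{*,(2)}; β_j)`. -/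
def lamStarSeq {Ω : Type*} [MeasurableSpace Ω] {m : ℕ} (μ : Measure Ω)
    (S V : ℕ → Fin m → Ω → ℝ) (lamMin lamMax β : Fin m → ℝ) (j : Fin m) : ℝ :=
  UStarSeq μ S V lamMin lamMax j
    (fun ℓ => if hl : ℓ < j then lamStarSeq μ S V lamMin lamMax β ℓ else 0) (β j)
termination_by j.val
decreasing_by exact hl

/-- The bumped empirical risk `g_j^+` computed from the first `n` datapoints:
`g_j^+(λ_j; λ_{1:(j−1)}) = (1/(n+1)) Σ_{i<n} L_j^{(i)}(λ_{1:j}) + Vmax_j/(n+1)`. -/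
def gPlusSeq {Ω : Type*} {m : ℕ} (n : ℕ) (S V : ℕ → Fin m → Ω → ℝ) (Vmax : Fin m → ℝ)
    (j : Fin m) (lam : Fin m → ℝ) (ω : Ω) : ℝ :=
  (1 / ((n : ℝ) + 1)) * ∑ i ∈ Finset.range n, lossSeq S V j i lam ω + Vmax j / ((n : ℝ) + 1)

/-- `U_j^+(λ_{1:(j−1)}; b) = inf{x ∈ Λ_j : g_j^+(x; λ_{1:(j−1)}) ≤ b}`, the infimum of the empty
set being `λ_j^max`. -/
def UPlusSeq {Ω : Type*} {m : ℕ} (n : ℕ) (S V : ℕ → Fin m → Ω → ℝ) (Vmax : Fin m → ℝ)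
    (lamMin lamMax : Fin m → ℝ) (j : Fin m) (lam : Fin m → ℝ) (b : ℝ) (ω : Ω) : ℝ :=
  sInf (insert (lamMax j)
    {x | x ∈ Icc (lamMin j) (lamMax j) ∧ gPlusSeq n S V Vmax j (Function.update lam j x) ω ≤ b})

/-- The even-indexed MULTIRISK thresholds computed from the first `n` datapoints:
`lamHatSeq n … j k = λ̂_j^{(2k)}(n) = U_j^+(λ̂_1^{(2k+2)}(n),…,λ̂_{j−1}^{(2k+2)}(n); β_j^{(k−1)})`
where `β_j^{(k)} = β_j − k·δ_j` and `δ_j = (Vmax_j − Vmin_j)/(n+1)`.  In particular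
`lamHatSeq n … j 1` is the MULTIRISK threshold `λ̂_j^{(2)}(n)`. -/
def lamHatSeq {Ω : Type*} {m : ℕ} (n : ℕ) (S V : ℕ → Fin m → Ω → ℝ)
    (lamMin lamMax Vmin Vmax β : Fin m → ℝ) (j : Fin m) (k : ℕ) (ω : Ω) : ℝ :=
  UPlusSeq n S V Vmax lamMin lamMax j
    (fun ℓ => if hl : ℓ < j then lamHatSeq n S V lamMin lamMax Vmin Vmax β ℓ (k + 1) ω else 0)
    (β j - ((k : ℝ) - 1) * ((Vmax j - Vmin j) / ((n : ℝ) + 1))) ω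
termination_by j.val
decreasing_by exact hl


/-!
The recursively defined population thresholds `λ^{*,(2)}` lie coordinatewise below every
feasible point, and the objective is monotone in the thresholds, so `λ^{*,(2)}` is at least as good
as any population minimizer. Discreteness of the scores and non-degeneracy of the budgets give the
strict gaps `g_j^*(λ^{*,(2)}) < β_j`. By Hoeffding's inequality, outside an event of probability
`O(exp (-c n))` the bumped empirical risks at `λ^{*,(2)}` stay within the budgets even after the
at most `m` decrements `δ_j`; on that event the MULTIRISK recursion is forced below `λ^{*,(2)}`,
so `λ̂^{(2)}(n)` does no worse than the minimizer. The exceptional event costs at most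
`Vmax_{m+1}` times its probability, and `exp (-c n) ≤ exp (-n^{0.99})` for large `n`.
-/

open ProbabilityTheory Filter Topology
open scoped NNReal

section General

variable {Ω : Type*} [MeasurableSpace Ω] {μ : Measure Ω}

lemma ProbabilityTheory.HasSubgaussianMGF.mono {X : Ω → ℝ} {c c' : ℝ≥0}
    (h : HasSubgaussianMGF X c μ) (hc : c ≤ c') : HasSubgaussianMGF X c' μ :=
  ⟨h.integrable_exp_mul, fun t => (h.mgf_le t).trans (Real.exp_le_exp.2 (by gcongr))⟩

lemma exists_measureReal_sum_range_ge_le_exp [IsProbabilityMeasure μ] {X : ℕ → Ω → ℝ}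
    (hind : iIndepFun X μ) (hX : ∀ i, AEMeasurable (X i) μ) {a b : ℝ}
    (hbd : ∀ i, ∀ᵐ ω ∂μ, X i ω ∈ Icc a b) {m₀ η : ℝ} (hmean : ∀ i, μ[X i] = m₀) (hη : 0 < η) :
    ∃ c > 0, ∀ n : ℕ,
      μ.real {ω | n * (m₀ + η) ≤ ∑ i ∈ Finset.range n, X i ω} ≤ Real.exp (-(c * n)) := by
  -- the `+ 1` keeps the variance proxy positive when `a = b`
  set K : ℝ≥0 := (‖b - a‖₊ / 2) ^ 2 + 1
  have hK : (0 : ℝ) < K := by positivity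
  refine ⟨η ^ 2 / (2 * K), by positivity, fun n => ?_⟩
  have hsubG : ∀ i < n, HasSubgaussianMGF (fun ω => X i ω - m₀) K μ := fun i _ =>
    (hmean i ▸ hasSubgaussianMGF_of_mem_Icc (hX i) (hbd i)).mono le_self_add
  have hcentered : iIndepFun (fun i ω => X i ω - m₀) μ :=
    hind.comp (fun _ x => x - m₀) fun _ => measurable_sub_const m₀
  have hHoeffding := HasSubgaussianMGF.measure_sum_range_ge_le_of_iIndepFun hcentered hsubG
    (ε := n * η) (by positivity)
  have hset : {ω | n * (m₀ + η) ≤ ∑ i ∈ Finset.range n, X i ω}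
      = {ω | n * η ≤ ∑ i ∈ Finset.range n, (X i ω - m₀)} := by
    ext ω
    simp only [Set.mem_ofPred_eq, Finset.sum_sub_distrib, Finset.sum_const, Finset.card_range,
      nsmul_eq_mul]
    constructor <;> intro h <;> linarith
  rw [hset]
  refine hHoeffding.trans_eq (congrArg Real.exp ?_)
  rcases n.eq_zero_or_pos with rfl | hn
  · simp
  · field_simp

lemma eventually_exp_neg_mul_le_exp_neg_rpow {c p : ℝ} (hc : 0 < c) (hp : p < 1) :
    ∀ᶠ n : ℕ in atTop, Real.exp (-(c * n)) ≤ Real.exp (-(n : ℝ) ^ p) := by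
  have hlim : Tendsto (fun n : ℕ => (n : ℝ) ^ (1 - p)) atTop atTop :=
    (tendsto_rpow_atTop (by linarith)).comp tendsto_natCast_atTop_atTop
  filter_upwards [hlim.eventually_ge_atTop c⁻¹, eventually_gt_atTop 0] with n hn hn0
  have hnpos : (0 : ℝ) < n := by exact_mod_cast hn0
  rw [Real.exp_le_exp, neg_le_neg_iff]
  calc (n : ℝ) ^ p = (n : ℝ) ^ p * (c * c⁻¹) := by rw [mul_inv_cancel₀ hc.ne', mul_one]
    _ ≤ (n : ℝ) ^ p * (c * (n : ℝ) ^ (1 - p)) := by gcongr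
    _ = c * n := by
      rw [mul_left_comm, ← Real.rpow_add hnpos, add_sub_cancel, Real.rpow_one]

lemma Finset.exists_gt_forall_notMem_Ioc (s : Finset ℝ) {a b : ℝ} (hab : a < b) :
    ∃ x, a < x ∧ x ≤ b ∧ ∀ y ∈ s, y ∉ Set.Ioc a x := by
  have hs : ∀ y ∈ s, ∀ᶠ x in 𝓝[>] a, y ∉ Set.Ioc a x := fun y _ => by
    rcases lt_or_ge a y with hy | hy
    · filter_upwards [nhdsWithin_le_nhds (eventually_lt_nhds hy)] with x hx h
      exact (h.2.trans_lt hx).false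
    · exact Eventually.of_forall fun x h => (h.1.trans_le hy).false
  obtain ⟨x, ⟨hax, hxb⟩, hx⟩ := ((eventually_mem_nhdsWithin.and
    (nhdsWithin_le_nhds (eventually_le_nhds hab))).and ((eventually_all_finset s).2 hs)).exists
  exact ⟨x, hax, hxb, hx⟩

lemma integral_le_integral_add_mul_measureReal [IsFiniteMeasure μ] {f g : Ω → ℝ} {B : Set Ω}
    {M : ℝ} (hg : Integrable g μ) (hg0 : 0 ≤ᵐ[μ] g) (hM : 0 ≤ M) (hB : MeasurableSet B)
    (hfg : ∀ᵐ ω ∂μ, f ω ≤ g ω + B.indicator (fun _ => M) ω) :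
    ∫ ω, f ω ∂μ ≤ ∫ ω, g ω ∂μ + M * μ.real B := by
  by_cases hf : Integrable f μ
  · have hind : Integrable (B.indicator fun _ => M) μ := (integrable_const M).indicator hB
    calc ∫ ω, f ω ∂μ ≤ ∫ ω, g ω + B.indicator (fun _ => M) ω ∂μ :=
          integral_mono_ae hf (hg.add hind) hfg
      _ = ∫ ω, g ω ∂μ + M * μ.real B := by
          rw [integral_add hg hind, integral_indicator_const M hB, smul_eq_mul, mul_comm]
  · rw [integral_undef hf]
    have := integral_nonneg_of_ae hg0
    positivity

end General

section Multirisk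

variable {Ω : Type*} {m : ℕ} {S V : ℕ → Fin m → Ω → ℝ}

-- `lossSeq S V j i lam` and the integrands of the objective are, definitionally,
-- `pointLoss j lam` and `pointObjective lam` composed with `datapoint S V Vobj i`; this is how
-- independence and identical distribution of the datapoints reach the losses.
def datapoint (S V : ℕ → Fin m → Ω → ℝ) (Vobj : ℕ → Ω → ℝ) (i : ℕ) (ω : Ω) :
    (Fin m → ℝ) × (Fin m → ℝ) × ℝ :=
  ((fun j => S i j ω), (fun j => V i j ω), Vobj i ω)

def pointLoss (j : Fin m) (lam : Fin m → ℝ) (x : (Fin m → ℝ) × (Fin m → ℝ) × ℝ) : ℝ :=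
  x.2.1 j * if (∀ l, l < j → x.1 l ≤ lam l) ∧ lam j < x.1 j then 1 else 0

def pointObjective (lam : Fin m → ℝ) (x : (Fin m → ℝ) × (Fin m → ℝ) × ℝ) : ℝ :=
  x.2.2 * if ∀ j, x.1 j ≤ lam j then 1 else 0

lemma measurable_pointLoss (j : Fin m) (lam : Fin m → ℝ) : Measurable (pointLoss j lam) :=
  measurable_snd.fst.eval.mul
    (Measurable.ite (by measurability) measurable_const measurable_const)

lemma measurable_pointObjective (lam : Fin m → ℝ) : Measurable (pointObjective lam) :=
  measurable_snd.snd.mul (Measurable.ite (by measurability) measurable_const measurable_const)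

lemma pointObjective_nonneg {lam : Fin m → ℝ} {x : (Fin m → ℝ) × (Fin m → ℝ) × ℝ}
    (hx : 0 ≤ x.2.2) : 0 ≤ pointObjective lam x := by
  unfold pointObjective; positivity

lemma pointObjective_le {lam : Fin m → ℝ} {x : (Fin m → ℝ) × (Fin m → ℝ) × ℝ}
    (hx : 0 ≤ x.2.2) : pointObjective lam x ≤ x.2.2 :=
  mul_le_of_le_one_right hx (by split_ifs <;> norm_num)

lemma pointObjective_mono {lam lam' : Fin m → ℝ} {x : (Fin m → ℝ) × (Fin m → ℝ) × ℝ}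
    (hx : 0 ≤ x.2.2) (h : ∀ j, lam j ≤ lam' j) : pointObjective lam x ≤ pointObjective lam' x := by
  unfold pointObjective
  gcongr
  split_ifs with h₁ h₂
  · exact le_rfl
  · exact absurd (fun j => (h₁ j).trans (h j)) h₂
  · exact zero_le_one
  · exact le_rfl

lemma lossSeq_nonneg {j : Fin m} {i : ℕ} {lam : Fin m → ℝ} {ω : Ω} (hV : 0 ≤ V i j ω) :
    0 ≤ lossSeq S V j i lam ω := by
  unfold lossSeq; positivity

lemma lossSeq_le {j : Fin m} {i : ℕ} {lam : Fin m → ℝ} {ω : Ω} (hV : 0 ≤ V i j ω) :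
    lossSeq S V j i lam ω ≤ V i j ω :=
  mul_le_of_le_one_right hV (by split_ifs <;> norm_num)

lemma lossSeq_mono {j : Fin m} {i : ℕ} {lam lam' : Fin m → ℝ} {ω : Ω} (hV : 0 ≤ V i j ω)
    (hlt : ∀ l < j, lam l ≤ lam' l) (hj : lam' j ≤ lam j) :
    lossSeq S V j i lam ω ≤ lossSeq S V j i lam' ω := by
  unfold lossSeq
  gcongr
  split_ifs with h₁ h₂
  · exact le_rfl
  · exact absurd ⟨fun l hl => (h₁.1 l hl).trans (hlt l hl), hj.trans_lt h₁.2⟩ h₂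
  · exact zero_le_one
  · exact le_rfl

lemma lossSeq_congr {j : Fin m} {i : ℕ} {lam lam' : Fin m → ℝ} (h : ∀ l ≤ j, lam l = lam' l) :
    lossSeq S V j i lam = lossSeq S V j i lam' := by
  funext ω
  have hcond : ((∀ l, l < j → S i l ω ≤ lam l) ∧ lam j < S i j ω)
      ↔ ((∀ l, l < j → S i l ω ≤ lam' l) ∧ lam' j < S i j ω) := by
    rw [h j le_rfl]
    exact and_congr_left' (forall₂_congr fun l hl => by rw [h l hl.le])
  simp only [lossSeq, hcond]

lemma lossSeq_update_congr {j : Fin m} {i : ℕ} {lam lam' : Fin m → ℝ}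
    (h : ∀ l < j, lam l = lam' l) (x : ℝ) :
    lossSeq S V j i (Function.update lam j x) = lossSeq S V j i (Function.update lam' j x) :=
  lossSeq_congr fun l hl => by
    rcases hl.lt_or_eq with hl | rfl
    · simp [hl.ne, h l hl]
    · simp

lemma lossSeq_update_eq {j : Fin m} {i : ℕ} {lam : Fin m → ℝ} {ω : Ω} {x : ℝ}
    (hx : lam j ≤ x) (hS : S i j ω ∉ Ioc (lam j) x) :
    lossSeq S V j i (Function.update lam j x) ω = lossSeq S V j i lam ω := by
  have hcond : ((∀ l, l < j → S i l ω ≤ Function.update lam j x l)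
        ∧ Function.update lam j x j < S i j ω)
      ↔ ((∀ l, l < j → S i l ω ≤ lam l) ∧ lam j < S i j ω) := by
    refine and_congr (forall₂_congr fun l hl => by rw [Function.update_of_ne hl.ne]) ?_
    rw [Function.update_self]
    exact ⟨hx.trans_lt, fun h => not_le.1 fun h' => hS ⟨h, h'⟩⟩
  simp only [lossSeq, hcond]

lemma gPlusSeq_mono {n : ℕ} {Vmax : Fin m → ℝ} {j : Fin m} {lam lam' : Fin m → ℝ} {ω : Ω}
    (hV : ∀ i < n, 0 ≤ V i j ω) (hlt : ∀ l < j, lam l ≤ lam' l) (hj : lam' j ≤ lam j) :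
    gPlusSeq n S V Vmax j lam ω ≤ gPlusSeq n S V Vmax j lam' ω := by
  unfold gPlusSeq
  gcongr with i hi
  exact lossSeq_mono (hV i (Finset.mem_range.1 hi)) hlt hj

lemma UPlusSeq_congr {n : ℕ} {Vmax lamMin lamMax : Fin m → ℝ} {j : Fin m} {lam lam' : Fin m → ℝ}
    (h : ∀ l < j, lam l = lam' l) (b : ℝ) (ω : Ω) :
    UPlusSeq n S V Vmax lamMin lamMax j lam b ω = UPlusSeq n S V Vmax lamMin lamMax j lam' b ω := by
  simp only [UPlusSeq, gPlusSeq, lossSeq_update_congr h]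

lemma UPlusSeq_le {n : ℕ} {Vmax lamMin lamMax : Fin m → ℝ} {j : Fin m} {lam : Fin m → ℝ}
    {b x : ℝ} {ω : Ω} (hx : x ∈ Icc (lamMin j) (lamMax j))
    (h : gPlusSeq n S V Vmax j (Function.update lam j x) ω ≤ b) :
    UPlusSeq n S V Vmax lamMin lamMax j lam b ω ≤ x :=
  csInf_le (bddBelow_insert.2 ⟨lamMin j, fun _ hy => hy.1.1⟩) (Set.mem_insert_of_mem _ ⟨hx, h⟩)

lemma lamHatSeq_eq (n : ℕ) (S V : ℕ → Fin m → Ω → ℝ) (lamMin lamMax Vmin Vmax β : Fin m → ℝ)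
    (j : Fin m) (k : ℕ) (ω : Ω) :
    lamHatSeq n S V lamMin lamMax Vmin Vmax β j k ω
      = UPlusSeq n S V Vmax lamMin lamMax j
          (fun l => lamHatSeq n S V lamMin lamMax Vmin Vmax β l (k + 1) ω)
          (β j - ((k : ℝ) - 1) * ((Vmax j - Vmin j) / ((n : ℝ) + 1))) ω := by
  rw [lamHatSeq]
  apply UPlusSeq_congr
  intro l hl
  exact dif_pos hl

lemma lamHatSeq_le {n : ℕ} {lamMin lamMax Vmin Vmax β lam : Fin m → ℝ} {ω : Ω}
    (hmem : ∀ j, lam j ∈ Icc (lamMin j) (lamMax j)) (hV : ∀ i < n, ∀ j, 0 ≤ V i j ω)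
    (hVle : ∀ j, Vmin j ≤ Vmax j)
    (hbudget : ∀ j, gPlusSeq n S V Vmax j lam ω + m * (Vmax j - Vmin j) / ((n : ℝ) + 1) ≤ β j)
    (j : Fin m) : lamHatSeq n S V lamMin lamMax Vmin Vmax β j 1 ω ≤ lam j := by
  -- `λ̂_j^{(2k)}` calls `λ̂_l^{(2k+2)}` for `l < j`, so `k + j` stays at most `m`
  suffices h : ∀ j : Fin m, ∀ k : ℕ, k + j ≤ m →
      lamHatSeq n S V lamMin lamMax Vmin Vmax β j k ω ≤ lam j from h j 1 (by omega)
  intro j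
  induction j using WellFoundedLT.induction with
  | _ j ih =>
  intro k hk
  rw [lamHatSeq_eq]
  refine UPlusSeq_le (hmem j) ?_
  have hδ : 0 ≤ (Vmax j - Vmin j) / ((n : ℝ) + 1) :=
    div_nonneg (sub_nonneg.2 (hVle j)) (by positivity)
  have hkm : (k : ℝ) - 1 ≤ m := by
    have : (k : ℝ) ≤ m := by exact_mod_cast (show k ≤ m by omega)
    linarith
  calc gPlusSeq n S V Vmax j (Function.update
          (fun l => lamHatSeq n S V lamMin lamMax Vmin Vmax β l (k + 1) ω) j (lam j)) ω
        ≤ gPlusSeq n S V Vmax j lam ω :=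
          gPlusSeq_mono (fun i hi => hV i hi j)
            (fun l hl => by simpa [hl.ne] using ih l hl (k + 1) (by omega)) (by simp)
      _ ≤ β j - m * ((Vmax j - Vmin j) / ((n : ℝ) + 1)) := by
          rw [← mul_div_assoc]; linarith [hbudget j]
      _ ≤ β j - ((k : ℝ) - 1) * ((Vmax j - Vmin j) / ((n : ℝ) + 1)) := by gcongr

end Multirisk

section Population

variable {Ω : Type*} [MeasurableSpace Ω] {μ : Measure Ω} {m : ℕ} {S V : ℕ → Fin m → Ω → ℝ}

lemma measurable_lossSeq (hS : ∀ i j, Measurable (S i j)) (hV : ∀ i j, Measurable (V i j))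
    (j : Fin m) (i : ℕ) (lam : Fin m → ℝ) : Measurable (lossSeq S V j i lam) :=
  (hV i j).mul (Measurable.ite (by measurability) measurable_const measurable_const)

lemma measurable_gPlusSeq (hS : ∀ i j, Measurable (S i j)) (hV : ∀ i j, Measurable (V i j))
    (n : ℕ) (Vmax : Fin m → ℝ) (j : Fin m) (lam : Fin m → ℝ) :
    Measurable (gPlusSeq n S V Vmax j lam) := by
  have := fun i => measurable_lossSeq hS hV j i lam
  unfold gPlusSeq
  fun_prop

lemma integrable_lossSeq [IsFiniteMeasure μ] (hS : ∀ i j, Measurable (S i j))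
    (hV : ∀ i j, Measurable (V i j)) {j : Fin m} {i : ℕ} {b : ℝ}
    (hbd : ∀ᵐ ω ∂μ, V i j ω ∈ Icc 0 b) (lam : Fin m → ℝ) :
    Integrable (lossSeq S V j i lam) μ :=
  Integrable.of_mem_Icc 0 b (measurable_lossSeq hS hV j i lam).aemeasurable
    (hbd.mono fun _ hω => ⟨lossSeq_nonneg hω.1, (lossSeq_le hω.1).trans hω.2⟩)

lemma gStarSeq_nonneg {j : Fin m} (hV : ∀ᵐ ω ∂μ, 0 ≤ V 0 j ω) (lam : Fin m → ℝ) :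
    0 ≤ gStarSeq μ S V j lam :=
  integral_nonneg_of_ae (hV.mono fun _ hω => lossSeq_nonneg hω)

lemma gStarSeq_mono [IsFiniteMeasure μ] (hS : ∀ i j, Measurable (S i j))
    (hV : ∀ i j, Measurable (V i j)) {j : Fin m} {b : ℝ} (hbd : ∀ᵐ ω ∂μ, V 0 j ω ∈ Icc 0 b)
    {lam lam' : Fin m → ℝ} (hlt : ∀ l < j, lam l ≤ lam' l) (hj : lam' j ≤ lam j) :
    gStarSeq μ S V j lam ≤ gStarSeq μ S V j lam' :=
  integral_mono_ae (integrable_lossSeq hS hV hbd lam) (integrable_lossSeq hS hV hbd lam')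
    (hbd.mono fun _ hω => lossSeq_mono hω.1 hlt hj)

lemma UStarSeq_congr {lamMin lamMax : Fin m → ℝ} {j : Fin m} {lam lam' : Fin m → ℝ}
    (h : ∀ l < j, lam l = lam' l) (b : ℝ) :
    UStarSeq μ S V lamMin lamMax j lam b = UStarSeq μ S V lamMin lamMax j lam' b := by
  simp only [UStarSeq, gStarSeq, lossSeq_update_congr h]

lemma UStarSeq_le {lamMin lamMax : Fin m → ℝ} {j : Fin m} {lam : Fin m → ℝ} {b y : ℝ}
    (hy : lamMin j ≤ y)
    (h : ∀ x ∈ Icc (lamMin j) (lamMax j),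
      b < gStarSeq μ S V j (Function.update lam j x) → x ≤ y) :
    UStarSeq μ S V lamMin lamMax j lam b ≤ y :=
  csSup_le (Set.insert_nonempty _ _) (Set.forall_mem_insert.2 ⟨hy, fun x hx => h x hx.1 hx.2⟩)

lemma gStarSeq_update_le_of_UStarSeq_lt {lamMin lamMax : Fin m → ℝ} {j : Fin m}
    {lam : Fin m → ℝ} {b x : ℝ} (hx : UStarSeq μ S V lamMin lamMax j lam b < x)
    (hxmax : x ≤ lamMax j) : gStarSeq μ S V j (Function.update lam j x) ≤ b := by
  have hbdd : BddAbove (insert (lamMin j) {x | x ∈ Icc (lamMin j) (lamMax j)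
      ∧ b < gStarSeq μ S V j (Function.update lam j x)}) :=
    bddAbove_insert.2 ⟨lamMax j, fun _ hy => hy.1.2⟩
  have hxmin : lamMin j ≤ x := (le_csSup hbdd (Set.mem_insert _ _)).trans hx.le
  exact le_of_not_gt fun hb =>
    hx.not_ge (le_csSup hbdd (Set.mem_insert_of_mem _ ⟨⟨hxmin, hxmax⟩, hb⟩))

lemma lamStarSeq_eq (μ : Measure Ω) (S V : ℕ → Fin m → Ω → ℝ) (lamMin lamMax β : Fin m → ℝ)
    (j : Fin m) :
    lamStarSeq μ S V lamMin lamMax β j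
      = UStarSeq μ S V lamMin lamMax j (lamStarSeq μ S V lamMin lamMax β) (β j) := by
  rw [lamStarSeq]
  apply UStarSeq_congr
  intro l hl
  exact dif_pos hl

lemma lamStarSeq_le_of_feasible [IsFiniteMeasure μ] (hS : ∀ i j, Measurable (S i j))
    (hV : ∀ i j, Measurable (V i j)) {Vmax : Fin m → ℝ}
    (hbd : ∀ j, ∀ᵐ ω ∂μ, V 0 j ω ∈ Icc 0 (Vmax j)) {lamMin lamMax β lam : Fin m → ℝ}
    (hmin : ∀ j, lamMin j ≤ lam j) (hfeas : ∀ j, gStarSeq μ S V j lam ≤ β j) (j : Fin m) :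
    lamStarSeq μ S V lamMin lamMax β j ≤ lam j := by
  induction j using WellFoundedLT.induction with
  | _ j ih =>
  rw [lamStarSeq_eq]
  refine UStarSeq_le (hmin j) fun x _ hβx => le_of_not_gt fun hxj => hβx.not_ge ?_
  calc gStarSeq μ S V j (Function.update (lamStarSeq μ S V lamMin lamMax β) j x)
      ≤ gStarSeq μ S V j lam :=
        gStarSeq_mono hS hV (hbd j) (fun l hl => by simpa [hl.ne] using ih l hl)
          (by simpa using hxj.le)
    _ ≤ β j := hfeas j

lemma gStarSeq_update_eq {j : Fin m} {lam : Fin m → ℝ} {x : ℝ} (hx : lam j ≤ x)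
    (hS : ∀ᵐ ω ∂μ, S 0 j ω ∉ Ioc (lam j) x) :
    gStarSeq μ S V j (Function.update lam j x) = gStarSeq μ S V j lam :=
  integral_congr_ae (hS.mono fun _ hω => lossSeq_update_eq hx hω)

lemma gStarSeq_lamStarSeq_lt {lamMin lamMax β : Fin m → ℝ} {j : Fin m}
    (hdisc : ∃ 𝒮 : Finset ℝ, ∀ᵐ ω ∂μ, S 0 j ω ∈ (𝒮 : Set ℝ))
    (hnondeg : β j ∉ Set.range (fun x : ℝ => gStarSeq μ S V j
      (Function.update (lamStarSeq μ S V lamMin lamMax β) j x)))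
    (hstar : lamStarSeq μ S V lamMin lamMax β j ∈ Ioo (lamMin j) (lamMax j)) :
    gStarSeq μ S V j (lamStarSeq μ S V lamMin lamMax β) < β j := by
  set lamStar := lamStarSeq μ S V lamMin lamMax β
  obtain ⟨𝒮, h𝒮⟩ := hdisc
  -- just above `λ_j^{*,(2)}` the score has no atom, so the risk is flat there
  obtain ⟨x, hx, hxmax, hgap⟩ := 𝒮.exists_gt_forall_notMem_Ioc hstar.2
  have hflat : gStarSeq μ S V j (Function.update lamStar j x) = gStarSeq μ S V j lamStar :=
    gStarSeq_update_eq hx.le (h𝒮.mono fun _ hω => hgap _ hω)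
  have hle : gStarSeq μ S V j (Function.update lamStar j x) ≤ β j :=
    gStarSeq_update_le_of_UStarSeq_lt (by rwa [← lamStarSeq_eq]) hxmax
  exact (hflat ▸ hle).lt_of_ne fun h => hnondeg ⟨lamStar j, by simpa using h⟩

end Population

section Sampling

variable {Ω : Type*} {m : ℕ} {S V : ℕ → Fin m → Ω → ℝ} {Vobj : ℕ → Ω → ℝ}

def budgetViolation (n : ℕ) (S V : ℕ → Fin m → Ω → ℝ) (Vmin Vmax β lam : Fin m → ℝ) : Set Ω :=
  ⋃ j, {ω | β j < gPlusSeq n S V Vmax j lam ω + m * (Vmax j - Vmin j) / ((n : ℝ) + 1)}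

lemma pointObjective_lamHatSeq_le {n : ℕ} {lamMin lamMax Vmin Vmax β lam lam' : Fin m → ℝ}
    {M : ℝ} {ω : Ω} (hmem : ∀ j, lam j ∈ Icc (lamMin j) (lamMax j))
    (hlam : ∀ j, lam j ≤ lam' j) (hV : ∀ i < n, ∀ j, 0 ≤ V i j ω)
    (hVle : ∀ j, Vmin j ≤ Vmax j) (hobj : Vobj n ω ∈ Icc 0 M) :
    pointObjective (fun j => lamHatSeq n S V lamMin lamMax Vmin Vmax β j 1 ω)
        (datapoint S V Vobj n ω)
      ≤ pointObjective lam' (datapoint S V Vobj n ω)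
        + (budgetViolation n S V Vmin Vmax β lam).indicator (fun _ => M) ω := by
  by_cases hbad : ω ∈ budgetViolation n S V Vmin Vmax β lam
  · rw [Set.indicator_of_mem hbad]
    have hle : pointObjective (fun j => lamHatSeq n S V lamMin lamMax Vmin Vmax β j 1 ω)
        (datapoint S V Vobj n ω) ≤ Vobj n ω := pointObjective_le hobj.1
    have h0 : 0 ≤ pointObjective lam' (datapoint S V Vobj n ω) := pointObjective_nonneg hobj.1
    linarith [hobj.2]
  · rw [Set.indicator_of_notMem hbad, add_zero]
    simp only [budgetViolation, Set.mem_iUnion, Set.mem_ofPred_eq, not_exists, not_lt] at hbad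
    exact pointObjective_mono hobj.1 fun j => (lamHatSeq_le hmem hV hVle hbad j).trans (hlam j)

variable [MeasurableSpace Ω] {μ : Measure Ω}

lemma measurable_datapoint (hS : ∀ i j, Measurable (S i j)) (hV : ∀ i j, Measurable (V i j))
    (hVobj : ∀ i, Measurable (Vobj i)) (i : ℕ) : Measurable (datapoint S V Vobj i) :=
  (measurable_pi_lambda _ (hS i)).prodMk ((measurable_pi_lambda _ (hV i)).prodMk (hVobj i))

lemma identDistrib_lossSeq {i : ℕ}
    (h : IdentDistrib (datapoint S V Vobj i) (datapoint S V Vobj 0) μ μ) (j : Fin m)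
    (lam : Fin m → ℝ) : IdentDistrib (lossSeq S V j i lam) (lossSeq S V j 0 lam) μ μ :=
  h.comp (measurable_pointLoss j lam)

lemma iIndepFun_lossSeq (h : iIndepFun (datapoint S V Vobj) μ) (j : Fin m) (lam : Fin m → ℝ) :
    iIndepFun (fun i => lossSeq S V j i lam) μ :=
  h.comp (fun _ => pointLoss j lam) fun _ => measurable_pointLoss j lam

lemma eventually_measureReal_gPlusSeq_add_gt_le [IsProbabilityMeasure μ] {j : Fin m}
    {Vmax β lam : Fin m → ℝ} (hind : iIndepFun (fun i => lossSeq S V j i lam) μ)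
    (hident : ∀ i, IdentDistrib (lossSeq S V j i lam) (lossSeq S V j 0 lam) μ μ)
    (hbd : ∀ i, ∀ᵐ ω ∂μ, V i j ω ∈ Icc 0 (Vmax j))
    (hgap : gStarSeq μ S V j lam < β j) (r : ℝ) {p : ℝ} (hp : p < 1) :
    ∀ᶠ n : ℕ in atTop, μ.real {ω | β j < gPlusSeq n S V Vmax j lam ω + r / ((n : ℝ) + 1)}
      ≤ Real.exp (-(n : ℝ) ^ p) := by
  set g := gStarSeq μ S V j lam
  have hη : 0 < (β j - g) / 2 := half_pos (sub_pos.2 hgap)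
  have hg : 0 ≤ g := gStarSeq_nonneg ((hbd 0).mono fun _ h => h.1) lam
  obtain ⟨c, hc, hconc⟩ := exists_measureReal_sum_range_ge_le_exp (m₀ := g) hind
    (fun i => (hident i).aemeasurable_fst)
    (fun i => (hbd i).mono fun _ h => ⟨lossSeq_nonneg h.1, (lossSeq_le h.1).trans h.2⟩)
    (fun i => (hident i).integral_eq) hη
  have hslack : ∀ᶠ n : ℕ in atTop, (Vmax j + r) * (1 / ((n : ℝ) + 1)) ≤ (β j - g) / 2 := by
    have := tendsto_one_div_add_atTop_nhds_zero_nat.const_mul (Vmax j + r)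
    rw [mul_zero] at this
    exact this.eventually (ge_mem_nhds hη)
  filter_upwards [hslack, eventually_exp_neg_mul_le_exp_neg_rpow hc hp] with n hn hexp
  refine (measureReal_mono fun ω hω => ?_).trans ((hconc n).trans hexp)
  -- the slack `(Vmax_j + r)/(n+1)` is eaten by half of the gap `β_j - g_j^*`
  have hn1 : (0 : ℝ) < n + 1 := by positivity
  rw [mul_one_div, div_le_iff₀ hn1] at hn
  have hsum : gPlusSeq n S V Vmax j lam ω + r / ((n : ℝ) + 1)
      = (∑ i ∈ Finset.range n, lossSeq S V j i lam ω + (Vmax j + r)) / ((n : ℝ) + 1) := by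
    unfold gPlusSeq; field_simp; ring
  simp only [Set.mem_ofPred_eq, hsum, lt_div_iff₀ hn1] at hω ⊢
  nlinarith

lemma measureReal_budgetViolation_le {n : ℕ} {Vmin Vmax β lam : Fin m → ℝ} {ε : ℝ}
    (h : ∀ j, μ.real {ω | β j < gPlusSeq n S V Vmax j lam ω
      + m * (Vmax j - Vmin j) / ((n : ℝ) + 1)} ≤ ε) :
    μ.real (budgetViolation n S V Vmin Vmax β lam) ≤ m * ε :=
  (measureReal_iUnion_fintype_le _).trans ((Finset.sum_le_sum fun j _ => h j).trans_eq (by simp))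

lemma integral_pointObjective_lamHatSeq_le [IsProbabilityMeasure μ]
    (hS : ∀ i j, Measurable (S i j)) (hV : ∀ i j, Measurable (V i j))
    (hVobj : ∀ i, Measurable (Vobj i)) {n : ℕ} {lamMin lamMax Vmin Vmax β lam lam' : Fin m → ℝ}
    {M : ℝ} (hmem : ∀ j, lam j ∈ Icc (lamMin j) (lamMax j)) (hlam : ∀ j, lam j ≤ lam' j)
    (hVnn : ∀ i j, ∀ᵐ ω ∂μ, 0 ≤ V i j ω) (hVle : ∀ j, Vmin j ≤ Vmax j)
    (hobj : ∀ᵐ ω ∂μ, Vobj n ω ∈ Icc 0 M) :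
    ∫ ω, pointObjective (fun j => lamHatSeq n S V lamMin lamMax Vmin Vmax β j 1 ω)
        (datapoint S V Vobj n ω) ∂μ
      ≤ ∫ ω, pointObjective lam' (datapoint S V Vobj n ω) ∂μ
        + M * μ.real (budgetViolation n S V Vmin Vmax β lam) := by
  obtain ⟨_, h0M⟩ := hobj.exists
  have hM : 0 ≤ M := h0M.1.trans h0M.2
  refine integral_le_integral_add_mul_measureReal ?_
    (hobj.mono fun _ h => pointObjective_nonneg h.1) hM ?_ ?_
  · exact Integrable.of_mem_Icc 0 M
      ((measurable_pointObjective lam').comp (measurable_datapoint hS hV hVobj n)).aemeasurable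
      (hobj.mono fun _ h => ⟨pointObjective_nonneg h.1, (pointObjective_le h.1).trans h.2⟩)
  · exact MeasurableSet.iUnion fun j => measurableSet_lt measurable_const
      ((measurable_gPlusSeq hS hV n Vmax j lam).add_const _)
  · filter_upwards [hobj, ae_all_iff.2 fun i => ae_all_iff.2 (hVnn i)] with ω hω hVω
    exact pointObjective_lamHatSeq_le hmem hlam (fun i _ j => hVω i j) hVle hω

end Sampling

theorem multirisk_objective_near_optimal_discrete_general
    {Ω : Type*} [MeasurableSpace Ω] (μ : Measure Ω) [IsProbabilityMeasure μ]
    (m : ℕ)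
    (S V : ℕ → Fin m → Ω → ℝ) (Vobj : ℕ → Ω → ℝ)
    (hSmeas : ∀ i j, Measurable (S i j)) (hVmeas : ∀ i j, Measurable (V i j))
    (hVobjmeas : ∀ i, Measurable (Vobj i))
    -- i.i.d. datapoints
    (hindep : ProbabilityTheory.iIndepFun
      (fun i ω => ((fun j => S i j ω), (fun j => V i j ω), Vobj i ω)) μ)
    (hident : ∀ i : ℕ,
      Measure.map (fun ω => ((fun j => S i j ω), (fun j => V i j ω), Vobj i ω)) μ
        = Measure.map (fun ω => ((fun j => S 0 j ω), (fun j => V 0 j ω), Vobj 0 ω)) μ)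
    -- threshold domains Λ_j = [λ_j^min, λ_j^max]
    (lamMin lamMax : Fin m → ℝ)
    -- risk budgets and feasibility
    (β : Fin m → ℝ)
    -- bounded constraint costs
    (Vmin Vmax : Fin m → ℝ) (hVmin0 : ∀ j, 0 ≤ Vmin j) (hVle : ∀ j, Vmin j ≤ Vmax j)
    (hVbd : ∀ j : Fin m, ∀ᵐ ω ∂μ, V 0 j ω ∈ Icc (Vmin j) (Vmax j))
    -- bounded objective cost
    (VminObj VmaxObj : ℝ) (hVobj0 : 0 ≤ VminObj) (hVobjle : VminObj ≤ VmaxObj)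
    (hVobjbd : ∀ᵐ ω ∂μ, Vobj 0 ω ∈ Icc VminObj VmaxObj)
    -- every score has finite support
    (hdisc : ∀ j : Fin m, ∃ 𝒮 : Finset ℝ, ∀ᵐ ω ∂μ, S 0 j ω ∈ (𝒮 : Set ℝ))
    -- non-degenerate risk levels at all indices
    (hnondeg : ∀ j : Fin m,
      β j ∉ Set.range (fun x : ℝ => gStarSeq μ S V j
        (Function.update (fun ℓ => lamStarSeq μ S V lamMin lamMax β ℓ) j x)))
    -- λ_j^{*,(2)} ∈ (λ_j^min, λ_j^max)
    (hstar : ∀ j : Fin m,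
      lamStarSeq μ S V lamMin lamMax β j ∈ Ioo (lamMin j) (lamMax j)) :
    ∃ C : ℝ, 0 < C ∧ ∃ N : ℕ, ∀ n : ℕ, N ≤ n →
      ∀ lamst : Fin m → ℝ,
        (∀ j : Fin m, lamst j ∈ Icc (lamMin j) (lamMax j)) →
        (∀ j : Fin m, gStarSeq μ S V j lamst ≤ β j) →
        (∀ lam' : Fin m → ℝ, (∀ j : Fin m, lam' j ∈ Icc (lamMin j) (lamMax j)) →
          (∀ j : Fin m, gStarSeq μ S V j lam' ≤ β j) →
          (∫ ω, Vobj 0 ω * (if ∀ j : Fin m, S 0 j ω ≤ lamst j then 1 else 0) ∂μ)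
            ≤ ∫ ω, Vobj 0 ω * (if ∀ j : Fin m, S 0 j ω ≤ lam' j then 1 else 0) ∂μ) →
        (∫ ω, Vobj n ω *
            (if ∀ j : Fin m,
                S n j ω ≤ lamHatSeq n S V lamMin lamMax Vmin Vmax β j 1 ω
             then 1 else 0) ∂μ)
          ≤ (∫ ω, Vobj n ω * (if ∀ j : Fin m, S n j ω ≤ lamst j then 1 else 0) ∂μ)
              + C * Real.exp (-(n : ℝ) ^ (0.99 : ℝ)) := by
  set lamStar := lamStarSeq μ S V lamMin lamMax β
  have hY : ∀ i, IdentDistrib (datapoint S V Vobj i) (datapoint S V Vobj 0) μ μ := fun i =>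
    ⟨(measurable_datapoint hSmeas hVmeas hVobjmeas i).aemeasurable,
      (measurable_datapoint hSmeas hVmeas hVobjmeas 0).aemeasurable, hident i⟩
  have hVbd' : ∀ i j, ∀ᵐ ω ∂μ, V i j ω ∈ Icc 0 (Vmax j) := fun i j =>
    (hY i).symm.ae_snd (p := fun x => x.2.1 j ∈ Icc 0 (Vmax j))
      (measurableSet_Icc.preimage (by fun_prop))
      ((hVbd j).mono fun _ h => ⟨(hVmin0 j).trans h.1, h.2⟩)
  have hVobjbd' : ∀ i, ∀ᵐ ω ∂μ, Vobj i ω ∈ Icc 0 VmaxObj := fun i =>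
    (hY i).symm.ae_snd (p := fun x => x.2.2 ∈ Icc 0 VmaxObj)
      (measurableSet_Icc.preimage (by fun_prop)) (hVobjbd.mono fun _ h => ⟨hVobj0.trans h.1, h.2⟩)
  obtain ⟨N, hN⟩ := eventually_atTop.1 (eventually_all.2 fun j =>
    eventually_measureReal_gPlusSeq_add_gt_le (iIndepFun_lossSeq hindep j lamStar)
      (fun i => identDistrib_lossSeq (hY i) j lamStar) (hVbd' · j)
      (gStarSeq_lamStarSeq_lt (hdisc j) (hnondeg j) (hstar j)) (m * (Vmax j - Vmin j))
      (by norm_num : (0.99 : ℝ) < 1))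
  have hVmaxObj : 0 ≤ VmaxObj := hVobj0.trans hVobjle
  refine ⟨VmaxObj * m + 1, by positivity, N, fun n hn lamst hst hstfeas _ => ?_⟩
  have hobj := integral_pointObjective_lamHatSeq_le (β := β) hSmeas hVmeas hVobjmeas
    (fun j => Ioo_subset_Icc_self (hstar j))
    (lamStarSeq_le_of_feasible hSmeas hVmeas (hVbd' 0) (fun j => (hst j).1) hstfeas)
    (fun i j => (hVbd' i j).mono fun _ h => h.1) hVle (hVobjbd' n)
  have hviol := measureReal_budgetViolation_le (hN n hn)
  refine hobj.trans (add_le_add_right ?_ _)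
  have := Real.exp_pos (-(n : ℝ) ^ (0.99 : ℝ))
  nlinarith [mul_le_mul_of_nonneg_left hviol hVmaxObj]

/-- Theorem: improved near-optimality of the MULTIRISK objective for discrete
scores.  Under i.i.d. datapoints, feasibility, bounded constraint and objective costs, finitely
supported scores, non-degenerate risk levels at all indices, and
`λ_j^{*,(2)} ∈ (λ_j^min, λ_j^max)` for all `j`, there are `C > 0` and `N` such that for all
`n ≥ N` and every population minimizer `λ*`,
`E[V_{m+1}·1{S ≤ λ̂^{(2)}(n)}] ≤ E[V_{m+1}·1{S ≤ λ*}] + C·exp(−n^{0.99})`, where the fresh test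
datapoint is datapoint `n` (independent of the first `n` datapoints, indices `0,…,n−1`). -/
theorem multirisk_objective_near_optimal_discrete
    {Ω : Type*} [MeasurableSpace Ω] (μ : Measure Ω) [IsProbabilityMeasure μ]
    (m : ℕ) (hm : 1 ≤ m)
    (S V : ℕ → Fin m → Ω → ℝ) (Vobj : ℕ → Ω → ℝ)
    (hSmeas : ∀ i j, Measurable (S i j)) (hVmeas : ∀ i j, Measurable (V i j))
    (hVobjmeas : ∀ i, Measurable (Vobj i))
    -- i.i.d. datapoints
    (hindep : ProbabilityTheory.iIndepFun
      (fun i ω => ((fun j => S i j ω), (fun j => V i j ω), Vobj i ω)) μ)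
    (hident : ∀ i : ℕ,
      Measure.map (fun ω => ((fun j => S i j ω), (fun j => V i j ω), Vobj i ω)) μ
        = Measure.map (fun ω => ((fun j => S 0 j ω), (fun j => V 0 j ω), Vobj 0 ω)) μ)
    -- threshold domains Λ_j = [λ_j^min, λ_j^max]
    (lamMin lamMax : Fin m → ℝ) (hΛ : ∀ j, lamMin j ≤ lamMax j)
    -- risk budgets and feasibility
    (β : Fin m → ℝ) (hβ : ∀ j, 0 ≤ β j)
    (hfeas : ∀ j : Fin m, ∀ᵐ ω ∂μ, lossSeq S V j 0 lamMax ω ≤ β j)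
    -- bounded constraint costs
    (Vmin Vmax : Fin m → ℝ) (hVmin0 : ∀ j, 0 ≤ Vmin j) (hVle : ∀ j, Vmin j ≤ Vmax j)
    (hVbd : ∀ j : Fin m, ∀ᵐ ω ∂μ, V 0 j ω ∈ Icc (Vmin j) (Vmax j))
    -- bounded objective cost
    (VminObj VmaxObj : ℝ) (hVobj0 : 0 ≤ VminObj) (hVobjle : VminObj ≤ VmaxObj)
    (hVobjbd : ∀ᵐ ω ∂μ, Vobj 0 ω ∈ Icc VminObj VmaxObj)
    -- every score has finite support
    (hdisc : ∀ j : Fin m, ∃ 𝒮 : Finset ℝ, ∀ᵐ ω ∂μ, S 0 j ω ∈ (𝒮 : Set ℝ))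
    -- non-degenerate risk levels at all indices
    (hnondeg : ∀ j : Fin m,
      β j ∉ Set.range (fun x : ℝ => gStarSeq μ S V j
        (Function.update (fun ℓ => lamStarSeq μ S V lamMin lamMax β ℓ) j x)))
    -- λ_j^{*,(2)} ∈ (λ_j^min, λ_j^max)
    (hstar : ∀ j : Fin m,
      lamStarSeq μ S V lamMin lamMax β j ∈ Ioo (lamMin j) (lamMax j)) :
    ∃ C : ℝ, 0 < C ∧ ∃ N : ℕ, ∀ n : ℕ, N ≤ n →
      ∀ lamst : Fin m → ℝ,
        (∀ j : Fin m, lamst j ∈ Icc (lamMin j) (lamMax j)) →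
        (∀ j : Fin m, gStarSeq μ S V j lamst ≤ β j) →
        (∀ lam' : Fin m → ℝ, (∀ j : Fin m, lam' j ∈ Icc (lamMin j) (lamMax j)) →
          (∀ j : Fin m, gStarSeq μ S V j lam' ≤ β j) →
          (∫ ω, Vobj 0 ω * (if ∀ j : Fin m, S 0 j ω ≤ lamst j then 1 else 0) ∂μ)
            ≤ ∫ ω, Vobj 0 ω * (if ∀ j : Fin m, S 0 j ω ≤ lam' j then 1 else 0) ∂μ) →
        (∫ ω, Vobj n ω *
            (if ∀ j : Fin m,
                S n j ω ≤ lamHatSeq n S V lamMin lamMax Vmin Vmax β j 1 ω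
             then 1 else 0) ∂μ)
          ≤ (∫ ω, Vobj n ω * (if ∀ j : Fin m, S n j ω ≤ lamst j then 1 else 0) ∂μ)
              + C * Real.exp (-(n : ℝ) ^ (0.99 : ℝ)) :=
  multirisk_objective_near_optimal_discrete_general μ m S V Vobj hSmeas hVmeas hVobjmeas hindep
    hident lamMin lamMax β Vmin Vmax hVmin0 hVle hVbd VminObj VmaxObj hVobj0 hVobjle hVobjbd hdisc
    hnondeg hstar
end
end

section
/- (Controlling the risk via the symmetrized generalized inverse.) Under the stated conditions (exchangeability, feasibility, bounded costs), fix j ∈ {1,…,m}. For any symmetric functions Γ_1,…,Γ_{j−1} of the n+1 datapoints taking values in Λ_1,…,Λ_{j−1} respectively, one has E[L_j^{(n+1)}(Γ_1,…,Γ_{j−1}, U_j^sym(Γ_1,…,Γ_{j−1}; β_j))] ≤ β_j. -/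
/-!
Each `Γ_ℓ` is a symmetric function of the data, hence so is the plugged-in threshold
`λ̂ = (Γ, U_j^sym(Γ; β_j))`, and exchangeability makes the `n + 1` losses `L_j^{(i)}(λ̂)`
identically distributed: `E[L_j^{(n+1)}(λ̂)] = E[g_j^sym(λ̂)]`. Pointwise, `λ_j ↦ g_j^sym(λ_j; Γ)`
is a right-continuous step function which is at most `β_j` on `(U_j^sym, λ_j^max]` by the
definition of the supremum, and at `λ_j^max` by feasibility; so `g_j^sym(λ̂) ≤ β_j`.
Right-continuity also lets the supremum be taken over the rationals and `λ_j^max`, which makes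
`U_j^sym` a measurable function of the data.
-/


open MeasureTheory Set

attribute [local instance] Classical.propDecidable

noncomputable section

/-- The loss `L_j^{(i)}(λ_{1:j}) = V_j^{(i)} · 1{S_1^{(i)} ≤ λ_1, …, S_{j−1}^{(i)} ≤ λ_{j−1},
S_j^{(i)} > λ_j}`.  Only the coordinates `ℓ ≤ j` of the vector `lam` are read. -/
def lossFn {Ω : Type*} {m n : ℕ} (S V : Fin (n + 1) → Fin m → Ω → ℝ)
    (j : Fin m) (i : Fin (n + 1)) (lam : Fin m → ℝ) (ω : Ω) : ℝ :=
  V i j ω * (if (∀ l, l < j → S i l ω ≤ lam l) ∧ lam j < S i j ω then 1 else 0)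

/-- The symmetric oracle risk `g_j^sym(λ_j; λ_{1:(j−1)})`. -/
def gSym {Ω : Type*} {m n : ℕ} (S V : Fin (n + 1) → Fin m → Ω → ℝ)
    (j : Fin m) (lam : Fin m → ℝ) (ω : Ω) : ℝ :=
  (1 / ((n : ℝ) + 1)) * ∑ i : Fin (n + 1), lossFn S V j i lam ω

/-- The bumped empirical risk `g_j^+(λ_j; λ_{1:(j−1)})`. -/
def gPlus {Ω : Type*} {m n : ℕ} (S V : Fin (n + 1) → Fin m → Ω → ℝ) (Vmax : Fin m → ℝ)
    (j : Fin m) (lam : Fin m → ℝ) (ω : Ω) : ℝ :=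
  (1 / ((n : ℝ) + 1)) * ∑ i : Fin n, lossFn S V j i.castSucc lam ω + Vmax j / ((n : ℝ) + 1)

/-- `U_j^sym(λ_{1:(j−1)}; b) = sup{x ∈ Λ_j : g_j^sym(x; λ_{1:(j−1)}) > b}`, the supremum of the
empty set being `λ_j^min` (implemented by inserting `λ_j^min` into the set, which does not change
the supremum of a nonempty subset of `Λ_j`). -/
def USym {Ω : Type*} {m n : ℕ} (S V : Fin (n + 1) → Fin m → Ω → ℝ)
    (lamMin lamMax : Fin m → ℝ) (j : Fin m) (lam : Fin m → ℝ) (b : ℝ) (ω : Ω) : ℝ :=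
  sSup (insert (lamMin j)
    {x | x ∈ Icc (lamMin j) (lamMax j) ∧ b < gSym S V j (Function.update lam j x) ω})

/-- `U_j^+(λ_{1:(j−1)}; b) = inf{x ∈ Λ_j : g_j^+(x; λ_{1:(j−1)}) ≤ b}`, the infimum of the
empty set being `λ_j^max`. -/
def UPlus {Ω : Type*} {m n : ℕ} (S V : Fin (n + 1) → Fin m → Ω → ℝ) (Vmax : Fin m → ℝ)
    (lamMin lamMax : Fin m → ℝ) (j : Fin m) (lam : Fin m → ℝ) (b : ℝ) (ω : Ω) : ℝ :=
  sInf (insert (lamMax j)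
    {x | x ∈ Icc (lamMin j) (lamMax j) ∧ gPlus S V Vmax j (Function.update lam j x) ω ≤ b})

/-- The odd-indexed MULTIRISK thresholds: `lamOdd … j k = λ̂_j^{(2k−1)}
= U_j^sym(λ̂_1^{(2k+1)},…,λ̂_{j−1}^{(2k+1)}; β_j^{(k−1)})`, with `β_j^{(k)} = β_j − k·δ_j`
and `δ_j = (Vmax_j − Vmin_j)/(n+1)`. -/
def lamOdd {Ω : Type*} {m n : ℕ} (S V : Fin (n + 1) → Fin m → Ω → ℝ)
    (lamMin lamMax Vmin Vmax β : Fin m → ℝ) (j : Fin m) (k : ℕ) (ω : Ω) : ℝ :=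
  USym S V lamMin lamMax j
    (fun ℓ => if hl : ℓ < j then lamOdd S V lamMin lamMax Vmin Vmax β ℓ (k + 1) ω else 0)
    (β j - ((k : ℝ) - 1) * ((Vmax j - Vmin j) / ((n : ℝ) + 1))) ω
termination_by j.val
decreasing_by exact hl

/-- The even-indexed MULTIRISK thresholds: `lamEven … j k = λ̂_j^{(2k)}
= U_j^+(λ̂_1^{(2k+2)},…,λ̂_{j−1}^{(2k+2)}; β_j^{(k−1)})`.  In particular `lamEven … j 1` is the
MULTIRISK threshold `λ̂_j^{(2)}`. -/
def lamEven {Ω : Type*} {m n : ℕ} (S V : Fin (n + 1) → Fin m → Ω → ℝ)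
    (lamMin lamMax Vmin Vmax β : Fin m → ℝ) (j : Fin m) (k : ℕ) (ω : Ω) : ℝ :=
  UPlus S V Vmax lamMin lamMax j
    (fun ℓ => if hl : ℓ < j then lamEven S V lamMin lamMax Vmin Vmax β ℓ (k + 1) ω else 0)
    (β j - ((k : ℝ) - 1) * ((Vmax j - Vmin j) / ((n : ℝ) + 1))) ω
termination_by j.val
decreasing_by exact hl

open Filter Topology Function

section SuperlevelSup

def superlevelSup (f : ℝ → ℝ) (a b c : ℝ) : ℝ :=
  sSup (insert a {x | x ∈ Icc a b ∧ c < f x})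

variable {f : ℝ → ℝ} {a b c : ℝ}

theorem bddAbove_insert_superlevel : BddAbove (insert a {x | x ∈ Icc a b ∧ c < f x}) :=
  ⟨max a b, by
    rintro y (rfl | ⟨⟨-, hy⟩, -⟩)
    exacts [le_max_left _ _, hy.trans (le_max_right _ _)]⟩

theorem le_superlevelSup : a ≤ superlevelSup f a b c :=
  le_csSup bddAbove_insert_superlevel (mem_insert _ _)

theorem superlevelSup_le (hab : a ≤ b) : superlevelSup f a b c ≤ b :=
  csSup_le (insert_nonempty _ _) (by rintro y (rfl | ⟨⟨-, hy⟩, -⟩); exacts [hab, hy])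

theorem apply_superlevelSup_le (hab : a ≤ b) (hf : ∀ x, ContinuousWithinAt f (Ioi x) x)
    (hb : f b ≤ c) : f (superlevelSup f a b c) ≤ c := by
  rcases (superlevelSup_le hab).eq_or_lt with hU | hU
  · rwa [hU]
  refine le_of_tendsto (hf _) ?_
  filter_upwards [Ioo_mem_nhdsGT hU] with x hx
  by_contra! hcx
  have hmem : x ∈ insert a {x | x ∈ Icc a b ∧ c < f x} :=
    mem_insert_of_mem _ ⟨⟨le_superlevelSup.trans hx.1.le, hx.2.le⟩, hcx⟩
  exact (le_csSup bddAbove_insert_superlevel hmem).not_gt hx.1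

theorem lt_superlevelSup_iff (hf : ∀ x, ContinuousWithinAt f (Ioi x) x) {t : ℝ} :
    t < superlevelSup f a b c ↔
      t < a ∨ ∃ x ∈ insert b (range ((↑) : ℚ → ℝ)), x ∈ Icc a b ∧ c < f x ∧ t < x := by
  rw [superlevelSup, lt_csSup_iff bddAbove_insert_superlevel (insert_nonempty _ _)]
  constructor
  · rintro ⟨x, rfl | ⟨hx, hcx⟩, htx⟩
    · exact Or.inl htx
    right
    rcases hx.2.eq_or_lt with rfl | hxb
    · exact ⟨x, mem_insert _ _, hx, hcx, htx⟩
    -- right-continuity keeps `c < f` on some `(x, u)`, which contains a rational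
    obtain ⟨u, hxu, hu⟩ := mem_nhdsGT_iff_exists_Ioo_subset.1
      (((hf x).eventually (lt_mem_nhds hcx)).and (Ioo_mem_nhdsGT hxb))
    obtain ⟨q, hxq, hqu⟩ := exists_rat_btwn (show x < u from hxu)
    obtain ⟨hcq, hqb⟩ := hu ⟨hxq, hqu⟩
    exact ⟨q, mem_insert_of_mem _ ⟨q, rfl⟩, ⟨hx.1.trans hxq.le, hqb.2.le⟩, hcq, htx.trans hxq⟩
  · rintro (hta | ⟨x, -, hx, hcx, htx⟩)
    exacts [⟨a, mem_insert _ _, hta⟩, ⟨x, mem_insert_of_mem _ ⟨hx, hcx⟩, htx⟩]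

theorem measurable_superlevelSup {α : Type*} [MeasurableSpace α] {f : α → ℝ → ℝ}
    (hmeas : ∀ x, Measurable fun d => f d x) (hf : ∀ d x, ContinuousWithinAt (f d) (Ioi x) x)
    (a b c : ℝ) : Measurable fun d => superlevelSup (f d) a b c := by
  refine measurable_of_Ioi fun t => ?_
  have hpre : (fun d => superlevelSup (f d) a b c) ⁻¹' Ioi t = {_d | t < a} ∪
      ⋃ x ∈ insert b (range ((↑) : ℚ → ℝ)), {d | x ∈ Icc a b ∧ c < f d x ∧ t < x} := by
    ext d
    simp only [mem_preimage, mem_Ioi, lt_superlevelSup_iff (hf d), mem_union, mem_iUnion,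
      mem_ofPred_eq, exists_prop]
  rw [hpre]
  refine .union (.const _) (.biUnion ((countable_range _).insert b) fun x _ => ?_)
  exact (measurable_const.and ((measurable_const.lt (hmeas x)).and measurable_const)).setOf

end SuperlevelSup

section Loss

variable {Ω : Type*} {m n : ℕ} (S V : Fin (n + 1) → Fin m → Ω → ℝ) (j : Fin m)

theorem lossFn_update (lam : Fin m → ℝ) (x : ℝ) (i : Fin (n + 1)) (ω : Ω) :
    lossFn S V j i (update lam j x) ω =
      V i j ω * if (∀ l, l < j → S i l ω ≤ lam l) ∧ x < S i j ω then 1 else 0 := by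
  simp only [lossFn, update_self]
  congr 3
  exact propext (forall₂_congr fun l hl => by rw [update_of_ne hl.ne])

theorem lossFn_update_congr {lam lam' : Fin m → ℝ} (h : ∀ l < j, lam l = lam' l) (x : ℝ)
    (i : Fin (n + 1)) (ω : Ω) :
    lossFn S V j i (update lam j x) ω = lossFn S V j i (update lam' j x) ω := by
  simp only [lossFn_update]
  congr 3
  exact propext (forall₂_congr fun l hl => by rw [h l hl])

theorem lossFn_mono {i : Fin (n + 1)} {ω : Ω} {lam lam' : Fin m → ℝ} (hV : 0 ≤ V i j ω)
    (hlt : ∀ l < j, lam l ≤ lam' l) (hj : lam' j ≤ lam j) :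
    lossFn S V j i lam ω ≤ lossFn S V j i lam' ω := by
  refine mul_le_mul_of_nonneg_left ?_ hV
  split_ifs with h h'
  · rfl
  · exact absurd ⟨fun l hl => (h.1 l hl).trans (hlt l hl), hj.trans_lt h.2⟩ h'
  · exact zero_le_one
  · rfl

theorem abs_lossFn_le (i : Fin (n + 1)) (lam : Fin m → ℝ) (ω : Ω) :
    |lossFn S V j i lam ω| ≤ |V i j ω| := by
  rw [lossFn, abs_mul]
  exact mul_le_of_le_one_right (abs_nonneg _) (by split_ifs <;> simp)

theorem eventually_lossFn_update_eq (lam : Fin m → ℝ) (i : Fin (n + 1)) (ω : Ω) (x : ℝ) :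
    ∀ᶠ y in 𝓝[>] x, lossFn S V j i (update lam j y) ω = lossFn S V j i (update lam j x) ω := by
  have hstable : ∀ᶠ y in 𝓝[>] x, (y < S i j ω ↔ x < S i j ω) := by
    rcases lt_or_ge x (S i j ω) with h | h
    · filter_upwards [Ioo_mem_nhdsGT h] with y hy using iff_of_true hy.2 h
    · filter_upwards [self_mem_nhdsWithin] with y hy
      exact iff_of_false (h.trans hy.out.le).not_gt h.not_gt
  filter_upwards [hstable] with y hy
  simp only [lossFn_update, hy]

theorem continuousWithinAt_gSym_update (lam : Fin m → ℝ) (ω : Ω) (x : ℝ) :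
    ContinuousWithinAt (fun y => gSym S V j (update lam j y) ω) (Ioi x) x := by
  refine tendsto_const_nhds.congr' ?_
  filter_upwards [eventually_all.2 fun i => eventually_lossFn_update_eq S V j lam i ω x]
    with y hy
  simp only [gSym, hy]

theorem gSym_le_iff {lam : Fin m → ℝ} {ω : Ω} {b : ℝ} :
    gSym S V j lam ω ≤ b ↔ ∑ i, lossFn S V j i lam ω ≤ (n + 1) * b := by
  rw [gSym, one_div, inv_mul_le_iff₀ (by positivity)]

theorem gSym_le_of_forall_lossFn_le {lam : Fin m → ℝ} {ω : Ω} {b : ℝ}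
    (h : ∀ i, lossFn S V j i lam ω ≤ b) : gSym S V j lam ω ≤ b :=
  (gSym_le_iff S V j).2 <| by
    simpa using Finset.sum_le_sum (s := Finset.univ) fun i _ => h i

theorem gSym_comp_perm (π : Equiv.Perm (Fin (n + 1))) (lam : Fin m → ℝ) (ω : Ω) :
    gSym (fun i => S (π i)) (fun i => V (π i)) j lam ω = gSym S V j lam ω := by
  unfold gSym
  congr 1
  exact Equiv.sum_comp π fun i => lossFn S V j i lam ω

theorem gSym_update_USym_le {lamMin lamMax lam : Fin m → ℝ} {b : ℝ} {ω : Ω}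
    (hΛ : lamMin j ≤ lamMax j) (hV : ∀ i, 0 ≤ V i j ω) (hlam : ∀ l < j, lam l ≤ lamMax l)
    (hfeas : ∀ i, lossFn S V j i lamMax ω ≤ b) :
    gSym S V j (update lam j (USym S V lamMin lamMax j lam b ω)) ω ≤ b := by
  refine apply_superlevelSup_le hΛ (continuousWithinAt_gSym_update S V j lam ω) ?_
  refine gSym_le_of_forall_lossFn_le S V j fun i => (lossFn_mono S V j (hV i) ?_ ?_).trans (hfeas i)
  · intro l hl
    rw [update_of_ne hl.ne]
    exact hlam l hl
  · rw [update_self]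

end Loss

section LossAtUSym

variable {Ω : Type*} {m n : ℕ} (S V : Fin (n + 1) → Fin m → Ω → ℝ) (lamMin lamMax : Fin m → ℝ)
  (j : Fin m) (b : ℝ)

def lossAtUSym (lam : Fin m → ℝ) (i : Fin (n + 1)) (ω : Ω) : ℝ :=
  lossFn S V j i (update lam j (USym S V lamMin lamMax j lam b ω)) ω

theorem lossAtUSym_comp_perm (π : Equiv.Perm (Fin (n + 1))) (lam : Fin m → ℝ)
    (i : Fin (n + 1)) (ω : Ω) :
    lossAtUSym (fun i => S (π i)) (fun i => V (π i)) lamMin lamMax j b lam i ω =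
      lossAtUSym S V lamMin lamMax j b lam (π i) ω := by
  simp only [lossAtUSym, USym, gSym_comp_perm]
  rfl

theorem lossAtUSym_congr {lam lam' : Fin m → ℝ} (h : ∀ l < j, lam l = lam' l) (i : Fin (n + 1))
    (ω : Ω) :
    lossAtUSym S V lamMin lamMax j b lam i ω = lossAtUSym S V lamMin lamMax j b lam' i ω := by
  simp only [lossAtUSym, USym, gSym, lossFn_update_congr S V j h]

variable [MeasurableSpace Ω] {S V}

theorem measurable_lossFn (hS : ∀ i l, Measurable (S i l)) (hV : ∀ i l, Measurable (V i l))
    {lam : Ω → Fin m → ℝ} (hlam : Measurable lam) (i : Fin (n + 1)) :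
    Measurable fun ω => lossFn S V j i (lam ω) ω := by
  have hcoord (l : Fin m) : Measurable fun ω => lam ω l := (measurable_pi_apply l).comp hlam
  refine (hV i j).mul (Measurable.ite (Measurable.setOf ?_) measurable_const measurable_const)
  exact (Measurable.forall fun l => measurable_const.imp ((hS i l).le' (hcoord l))).and
    ((hcoord j).lt (hS i j))

theorem measurable_USym (hS : ∀ i l, Measurable (S i l)) (hV : ∀ i l, Measurable (V i l))
    {lam : Ω → Fin m → ℝ} (hlam : Measurable lam) :
    Measurable fun ω => USym S V lamMin lamMax j (lam ω) b ω :=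
  measurable_superlevelSup
    (fun _ => (Finset.measurable_sum _ fun i _ => measurable_lossFn j hS hV
      (measurable_update'.comp (hlam.prodMk measurable_const)) i).const_mul _)
    (fun ω => continuousWithinAt_gSym_update S V j (lam ω) ω) _ _ _

theorem measurable_lossAtUSym (hS : ∀ i l, Measurable (S i l)) (hV : ∀ i l, Measurable (V i l))
    {lam : Ω → Fin m → ℝ} (hlam : Measurable lam) (i : Fin (n + 1)) :
    Measurable fun ω => lossAtUSym S V lamMin lamMax j b (lam ω) i ω :=
  measurable_lossFn j hS hV
    (measurable_update'.comp (hlam.prodMk (measurable_USym lamMin lamMax j b hS hV hlam))) i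

end LossAtUSym

section Exchangeable

variable {Ω ι α : Type*} [MeasurableSpace Ω] [MeasurableSpace α] [DecidableEq ι]
  {μ : Measure Ω} {D : Ω → ι → α} {F : (ι → α) → ι → ℝ}

theorem integral_eq_of_exchangeable (hD : Measurable D)
    (hexch : ∀ π : Equiv.Perm ι, μ.map (fun ω i => D ω (π i)) = μ.map D)
    (hF : ∀ i, Measurable fun d => F d i)
    (hFperm : ∀ (π : Equiv.Perm ι) d i, F (fun k => d (π k)) i = F d (π i))
    (i k : ι) : ∫ ω, F (D ω) i ∂μ = ∫ ω, F (D ω) k ∂μ := by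
  set π := Equiv.swap i k
  have hDπ : Measurable fun ω i => D ω (π i) :=
    measurable_pi_lambda _ fun i => (measurable_pi_apply (π i)).comp hD
  calc ∫ ω, F (D ω) i ∂μ = ∫ ω, F (fun l => D ω (π l)) k ∂μ := by
        simp only [hFperm, π, Equiv.swap_apply_right]
    _ = ∫ d, F d k ∂μ.map (fun ω i => D ω (π i)) :=
        (integral_map hDπ.aemeasurable (hF k).aestronglyMeasurable).symm
    _ = ∫ d, F d k ∂μ.map D := by rw [hexch]
    _ = ∫ ω, F (D ω) k ∂μ := integral_map hD.aemeasurable (hF k).aestronglyMeasurable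

theorem integral_le_of_exchangeable [Fintype ι] [IsProbabilityMeasure μ] (hD : Measurable D)
    (hexch : ∀ π : Equiv.Perm ι, μ.map (fun ω i => D ω (π i)) = μ.map D)
    (hF : ∀ i, Measurable fun d => F d i)
    (hFperm : ∀ (π : Equiv.Perm ι) d i, F (fun k => d (π k)) i = F d (π i))
    (hint : ∀ i, Integrable (fun ω => F (D ω) i) μ) {c : ℝ}
    (hc : ∀ᵐ ω ∂μ, ∑ i, F (D ω) i ≤ Fintype.card ι * c) (k : ι) :
    ∫ ω, F (D ω) k ∂μ ≤ c := by
  have hcard : (0 : ℝ) < Fintype.card ι := Nat.cast_pos.2 (Fintype.card_pos_iff.2 ⟨k⟩)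
  refine le_of_mul_le_mul_left ?_ hcard
  calc (Fintype.card ι : ℝ) * ∫ ω, F (D ω) k ∂μ = ∑ i, ∫ ω, F (D ω) i ∂μ := by
        simp [integral_eq_of_exchangeable hD hexch hF hFperm _ k]
    _ = ∫ ω, ∑ i, F (D ω) i ∂μ := (integral_finsetSum _ fun i _ => hint i).symm
    _ ≤ ∫ _, (Fintype.card ι : ℝ) * c ∂μ :=
        integral_mono_ae (integrable_finsetSum _ fun i _ => hint i) (integrable_const _) hc
    _ = Fintype.card ι * c := by simp

end Exchangeable

section Dataset

variable {Ω : Type*} {m n : ℕ}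

abbrev Dataset (m n : ℕ) := Fin (n + 1) → (Fin m → ℝ) × (Fin m → ℝ)

def dataset (S V : Fin (n + 1) → Fin m → Ω → ℝ) (ω : Ω) : Dataset m n :=
  fun i => (fun l => S i l ω, fun l => V i l ω)

/- On the dataset space the scores and costs are coordinates, and
`lossFn S V j i lam ω = lossFn datasetScore datasetCost j i lam (dataset S V ω)` holds by `rfl`:
this is how an integrand is transported to the law of the data. -/
def datasetScore (i : Fin (n + 1)) (l : Fin m) (d : Dataset m n) : ℝ := (d i).1 l

def datasetCost (i : Fin (n + 1)) (l : Fin m) (d : Dataset m n) : ℝ := (d i).2 l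

theorem measurable_datasetScore (i : Fin (n + 1)) (l : Fin m) :
    Measurable (datasetScore (m := m) i l) :=
  (measurable_pi_apply l).comp (measurable_pi_apply i).fst

theorem measurable_datasetCost (i : Fin (n + 1)) (l : Fin m) :
    Measurable (datasetCost (m := m) i l) :=
  (measurable_pi_apply l).comp (measurable_pi_apply i).snd

theorem measurable_dataset [MeasurableSpace Ω] {S V : Fin (n + 1) → Fin m → Ω → ℝ}
    (hS : ∀ i l, Measurable (S i l)) (hV : ∀ i l, Measurable (V i l)) :
    Measurable (dataset S V) :=
  measurable_pi_lambda _ fun i =>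
    (measurable_pi_lambda _ fun l => hS i l).prodMk (measurable_pi_lambda _ fun l => hV i l)

theorem lossAtUSym_dataset_comp_perm (lamMin lamMax : Fin m → ℝ) (j : Fin m) (b : ℝ)
    (lam : Fin m → ℝ) (π : Equiv.Perm (Fin (n + 1))) (d : Dataset m n) (i : Fin (n + 1)) :
    lossAtUSym datasetScore datasetCost lamMin lamMax j b lam i (fun k => d (π k)) =
      lossAtUSym datasetScore datasetCost lamMin lamMax j b lam (π i) d :=
  lossAtUSym_comp_perm datasetScore datasetCost lamMin lamMax j b π lam i d

theorem exists_symmetric_extension (D : Ω → Dataset m n) (j : Fin m)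
    {Γ : Fin m → Ω → ℝ}
    (hΓ : ∀ ℓ : Fin m, ℓ < j → ∃ φ : Dataset m n → ℝ, Measurable φ ∧
      (∀ (π : Equiv.Perm (Fin (n + 1))) (d : Dataset m n), φ (fun i => d (π i)) = φ d) ∧
      ∀ ω, Γ ℓ ω = φ (D ω)) :
    ∃ Φ : Dataset m n → Fin m → ℝ, Measurable Φ ∧
      (∀ (π : Equiv.Perm (Fin (n + 1))) (d : Dataset m n), Φ (fun i => d (π i)) = Φ d) ∧
      ∀ ω, ∀ ℓ < j, Γ ℓ ω = Φ (D ω) ℓ := by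
  choose φ hφ hφperm hΓφ using hΓ
  refine ⟨fun d ℓ => if h : ℓ < j then φ ℓ h d else 0, measurable_pi_lambda _ fun ℓ => ?_,
    fun π d => funext fun ℓ => ?_, fun ω ℓ h => by simp only [h, dite_true, hΓφ ℓ h ω]⟩
  · split_ifs with h
    exacts [hφ ℓ h, measurable_const]
  · dsimp only
    split_ifs with h
    exacts [hφperm ℓ h π d, rfl]

end Dataset

theorem risk_control_symmetric_inverse_general
    {Ω : Type*} [MeasurableSpace Ω] (μ : Measure Ω) [IsProbabilityMeasure μ]
    (m n : ℕ)
    (S V : Fin (n + 1) → Fin m → Ω → ℝ)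
    (hSmeas : ∀ i j, Measurable (S i j)) (hVmeas : ∀ i j, Measurable (V i j))
    (lamMin lamMax : Fin m → ℝ) (hΛ : ∀ j, lamMin j ≤ lamMax j)
    (β : Fin m → ℝ)
    (Vmin Vmax : Fin m → ℝ) (hVmin0 : ∀ j, 0 ≤ Vmin j)
    (hVbd : ∀ i j, ∀ᵐ ω ∂μ, V i j ω ∈ Icc (Vmin j) (Vmax j))
    (hexch : ∀ π : Equiv.Perm (Fin (n + 1)),
      Measure.map (fun ω => fun i : Fin (n + 1) =>
          ((fun j => S (π i) j ω), (fun j => V (π i) j ω))) μ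
        = Measure.map (fun ω => fun i : Fin (n + 1) =>
          ((fun j => S i j ω), (fun j => V i j ω))) μ)
    (hfeas : ∀ (j : Fin m) (i : Fin (n + 1)), ∀ᵐ ω ∂μ, lossFn S V j i lamMax ω ≤ β j)
    (j : Fin m) (Γ : Fin m → Ω → ℝ)
    -- each Γ_ℓ, ℓ < j, is a symmetric measurable function of the n+1 datapoints,
    -- taking values in Λ_ℓ
    (hΓsym : ∀ ℓ : Fin m, ℓ < j →
      ∃ φ : (Fin (n + 1) → (Fin m → ℝ) × (Fin m → ℝ)) → ℝ, Measurable φ ∧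
        (∀ (π : Equiv.Perm (Fin (n + 1))) (d : Fin (n + 1) → (Fin m → ℝ) × (Fin m → ℝ)),
          φ (fun i => d (π i)) = φ d) ∧
        (∀ ω, Γ ℓ ω = φ (fun i => ((fun l => S i l ω), (fun l => V i l ω)))))
    (hΓrange : ∀ ℓ : Fin m, ℓ < j → ∀ ω, Γ ℓ ω ∈ Icc (lamMin ℓ) (lamMax ℓ)) :
    ∫ ω, lossFn S V j (Fin.last n)
        (Function.update (fun ℓ => Γ ℓ ω) j
          (USym S V lamMin lamMax j (fun ℓ => Γ ℓ ω) (β j) ω)) ω ∂μ ≤ β j := by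
  obtain ⟨Φ, hΦ, hΦperm, hΓΦ⟩ := exists_symmetric_extension (dataset S V) j hΓsym
  set F : Dataset m n → Fin (n + 1) → ℝ :=
    fun d i => lossAtUSym datasetScore datasetCost lamMin lamMax j (β j) (Φ d) i d
  have hloss (i : Fin (n + 1)) (ω : Ω) :
      lossAtUSym S V lamMin lamMax j (β j) (fun ℓ => Γ ℓ ω) i ω = F (dataset S V ω) i :=
    lossAtUSym_congr S V lamMin lamMax j (β j) (hΓΦ ω) i ω
  have hF (i : Fin (n + 1)) : Measurable fun d => F d i :=
    measurable_lossAtUSym lamMin lamMax j (β j) measurable_datasetScore measurable_datasetCost hΦ i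
  have hint (i : Fin (n + 1)) : Integrable (fun ω => F (dataset S V ω) i) μ := by
    refine .of_bound ((hF i).comp (measurable_dataset hSmeas hVmeas)).aestronglyMeasurable
      (Vmax j) ?_
    filter_upwards [hVbd i j] with ω hω
    rw [← hloss, Real.norm_eq_abs]
    exact (abs_lossFn_le S V j i _ ω).trans ((abs_of_nonneg ((hVmin0 j).trans hω.1)).trans_le hω.2)
  change ∫ ω, lossAtUSym S V lamMin lamMax j (β j) (fun ℓ => Γ ℓ ω) (Fin.last n) ω ∂μ ≤ β j
  simp only [hloss]
  refine integral_le_of_exchangeable (measurable_dataset hSmeas hVmeas) hexch hF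
    (fun π d i => by simp only [F, hΦperm, lossAtUSym_dataset_comp_perm]) hint ?_ (Fin.last n)
  filter_upwards [ae_all_iff.2 fun i => hVbd i j, ae_all_iff.2 (hfeas j)] with ω hV hfeas
  simp only [← hloss, Fintype.card_fin, Nat.cast_add_one]
  exact (gSym_le_iff S V j).1 <| gSym_update_USym_le S V j (hΛ j)
    (fun i => (hVmin0 j).trans (hV i).1) (fun ℓ hℓ => hΓΦ ω ℓ hℓ ▸ (hΓrange ℓ hℓ ω).2) hfeas

/-- Lemma: controlling the risk via the symmetrized generalized inverse.  Under
exchangeability, feasibility and bounded costs, for any symmetric `Λ_ℓ`-valued functions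
`Γ_1,…,Γ_{j−1}` of the `n+1` datapoints,
`E[L_j^{(n+1)}(Γ_{1:(j−1)}, U_j^sym(Γ_{1:(j−1)}; β_j))] ≤ β_j`. -/
theorem risk_control_symmetric_inverse
    {Ω : Type*} [MeasurableSpace Ω] (μ : Measure Ω) [IsProbabilityMeasure μ]
    (m n : ℕ) (hm : 1 ≤ m) (hn : 1 ≤ n)
    (S V : Fin (n + 1) → Fin m → Ω → ℝ)
    (hSmeas : ∀ i j, Measurable (S i j)) (hVmeas : ∀ i j, Measurable (V i j))
    (lamMin lamMax : Fin m → ℝ) (hΛ : ∀ j, lamMin j ≤ lamMax j)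
    (β : Fin m → ℝ) (hβ : ∀ j, 0 ≤ β j)
    (Vmin Vmax : Fin m → ℝ) (hVmin0 : ∀ j, 0 ≤ Vmin j) (hVle : ∀ j, Vmin j ≤ Vmax j)
    (hVbd : ∀ i j, ∀ᵐ ω ∂μ, V i j ω ∈ Icc (Vmin j) (Vmax j))
    (hexch : ∀ π : Equiv.Perm (Fin (n + 1)),
      Measure.map (fun ω => fun i : Fin (n + 1) =>
          ((fun j => S (π i) j ω), (fun j => V (π i) j ω))) μ
        = Measure.map (fun ω => fun i : Fin (n + 1) =>
          ((fun j => S i j ω), (fun j => V i j ω))) μ)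
    (hfeas : ∀ (j : Fin m) (i : Fin (n + 1)), ∀ᵐ ω ∂μ, lossFn S V j i lamMax ω ≤ β j)
    (j : Fin m) (Γ : Fin m → Ω → ℝ)
    -- each Γ_ℓ, ℓ < j, is a symmetric measurable function of the n+1 datapoints,
    -- taking values in Λ_ℓ
    (hΓsym : ∀ ℓ : Fin m, ℓ < j →
      ∃ φ : (Fin (n + 1) → (Fin m → ℝ) × (Fin m → ℝ)) → ℝ, Measurable φ ∧
        (∀ (π : Equiv.Perm (Fin (n + 1))) (d : Fin (n + 1) → (Fin m → ℝ) × (Fin m → ℝ)),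
          φ (fun i => d (π i)) = φ d) ∧
        (∀ ω, Γ ℓ ω = φ (fun i => ((fun l => S i l ω), (fun l => V i l ω)))))
    (hΓrange : ∀ ℓ : Fin m, ℓ < j → ∀ ω, Γ ℓ ω ∈ Icc (lamMin ℓ) (lamMax ℓ)) :
    ∫ ω, lossFn S V j (Fin.last n)
        (Function.update (fun ℓ => Γ ℓ ω) j
          (USym S V lamMin lamMax j (fun ℓ => Γ ℓ ω) (β j) ω)) ω ∂μ ≤ β j :=
  risk_control_symmetric_inverse_general μ m n S V hSmeas hVmeas lamMin lamMax hΛ β Vmin Vmax hVmin0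
    hVbd hexch hfeas j Γ hΓsym hΓrange
end
end

section
/- (Counting scores between two symmetric generalized-inverse levels.) Fix ℓ ∈ {1,…,m} and real numbers β ≥ β' ≥ 0 such that for every i ∈ {1,…,n+1}, L_ℓ^{(i)}(λ_1^min,…,λ_ℓ^min) > β almost surely and L_ℓ^{(i)}(λ_1^max,…,λ_ℓ^max) ≤ β' almost surely. Then for any λ_{1:(ℓ−1)} ∈ Λ_1×…×Λ_{ℓ−1}, almost surely the number of indices i ∈ {1,…,n+1} with S_1^{(i)} ≤ λ_1, …, S_{ℓ−1}^{(i)} ≤ λ_{ℓ−1} and S_ℓ^{(i)} ∈ ( U_ℓ^sym(λ_{1:(ℓ−1)}; β), U_ℓ^sym(λ_{1:(ℓ−1)}; β') ] is at most (β − β' + Vmax_ℓ/(n+1)) / (Vmin_ℓ/(n+1)). -/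
/-! As a function of the threshold `x = λ_ℓ`, the symmetric risk `(n+1) g_ℓ^sym` is the
nonincreasing step function `∑ V_ℓ^{(i)} 1{prefix constraints, x < S_ℓ^{(i)}}`. Just above
`U(β)` it is at most `(n+1) β`; just below `U(β')` it exceeds `(n+1) β'`. Between these two points
it loses at least `Vmin_ℓ` for every counted score, and since the scores are distinct, the point
`U(β')` itself carries at most one jump, of size at most `Vmax_ℓ`. Hence
`count · Vmin_ℓ < (n+1)(β - β') + Vmax_ℓ`. -/

open MeasureTheory Set

attribute [local instance] Classical.propDecidable

noncomputable section

open Filter Topology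
open scoped Finset

section LevelSup

def levelSup (lo hi : ℝ) (G : ℝ → ℝ) (b : ℝ) : ℝ :=
  sSup (insert lo {x | x ∈ Icc lo hi ∧ b < G x})

variable {lo hi b x : ℝ} {G : ℝ → ℝ}

lemma bddAbove_levelSet (lo hi b : ℝ) (G : ℝ → ℝ) :
    BddAbove (insert lo {x | x ∈ Icc lo hi ∧ b < G x}) :=
  ⟨max lo hi, by
    rintro x (rfl | ⟨⟨-, hx⟩, -⟩)
    exacts [le_max_left _ _, le_max_of_le_right hx]⟩

lemma levelSup_mem_Icc (h : lo ≤ hi) : levelSup lo hi G b ∈ Icc lo hi :=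
  ⟨le_csSup (bddAbove_levelSet lo hi b G) (mem_insert _ _),
    csSup_le (insert_nonempty _ _) (by rintro x (rfl | ⟨⟨-, hx⟩, -⟩); exacts [h, hx])⟩

lemma le_of_levelSup_lt (hx : x ≤ hi) (hUx : levelSup lo hi G b < x) : G x ≤ b := by
  by_contra! hb
  have hlo : lo ≤ levelSup lo hi G b := le_csSup (bddAbove_levelSet lo hi b G) (mem_insert _ _)
  exact hUx.not_ge <| le_csSup (bddAbove_levelSet lo hi b G)
    (mem_insert_of_mem _ ⟨⟨hlo.trans hUx.le, hx⟩, hb⟩)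

lemma lt_of_lt_levelSup (hG : Antitone G) (hx : lo ≤ x) (hxU : x < levelSup lo hi G b) :
    b < G x := by
  obtain ⟨z, hz, hxz⟩ := exists_lt_of_lt_csSup (insert_nonempty _ _) hxU
  rcases hz with rfl | ⟨-, hz⟩
  · exact absurd hx hxz.not_ge
  · exact hz.trans_le (hG hxz.le)

end LevelSup

section TailWeight

variable {ι : Type*} [Fintype ι] (P : ι → Prop) (s w : ι → ℝ)

def tailWeight (x : ℝ) : ℝ := ∑ i with P i ∧ x < s i, w i

lemma eventually_forall_lt_of_lt (a : ℝ) : ∀ᶠ x in 𝓝 a, ∀ i, a < s i → x < s i :=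
  eventually_all.2 fun i => by
    by_cases h : a < s i
    · exact (eventually_lt_nhds h).mono fun _ hx _ => hx
    · exact Eventually.of_forall fun _ h' => absurd h' h

lemma eventually_forall_gt_of_gt (a : ℝ) : ∀ᶠ x in 𝓝 a, ∀ i, s i < a → s i < x :=
  eventually_all.2 fun i => by
    by_cases h : s i < a
    · exact (eventually_gt_nhds h).mono fun _ hx _ => hx
    · exact Eventually.of_forall fun _ h' => absurd h' h

variable {P s w}

lemma tailWeight_sub_tailWeight {x y : ℝ} (hxy : x ≤ y) :
    tailWeight P s w x - tailWeight P s w y = ∑ i with P i ∧ s i ∈ Ioc x y, w i := by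
  simp only [tailWeight, Finset.sum_filter, ← Finset.sum_sub_distrib]
  refine Finset.sum_congr rfl fun i _ => ?_
  have : y < s i → x < s i := hxy.trans_lt
  by_cases hP : P i <;> by_cases hx : x < s i <;> by_cases hy : y < s i <;> simp_all

lemma tailWeight_antitone (hw : ∀ i, 0 ≤ w i) : Antitone (tailWeight P s w) := fun x y hxy =>
  sub_nonneg.1 <| by rw [tailWeight_sub_tailWeight hxy]; exact Finset.sum_nonneg fun i _ => hw i

lemma tailWeight_sub_le_of_injective (hs : Function.Injective s) {wmax : ℝ} (hwmax : 0 ≤ wmax)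
    (hw : ∀ i, w i ≤ wmax) {x y : ℝ} (hxy : x ≤ y) (hgap : ∀ i, s i < y → s i ≤ x) :
    tailWeight P s w x - tailWeight P s w y ≤ wmax := by
  set A := ({i : ι | P i ∧ s i ∈ Ioc x y} : Finset ι)
  have hA : #A ≤ 1 := Finset.card_le_one.2 fun i hi j hj => by
    simp only [A, Finset.mem_filter_univ, mem_Ioc] at hi hj
    have hsi : s i = y := hi.2.2.eq_of_not_lt fun h => (hgap i h).not_gt hi.2.1
    have hsj : s j = y := hj.2.2.eq_of_not_lt fun h => (hgap j h).not_gt hj.2.1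
    exact hs (hsi.trans hsj.symm)
  calc tailWeight P s w x - tailWeight P s w y = ∑ i ∈ A, w i := tailWeight_sub_tailWeight hxy
    _ ≤ #A • wmax := Finset.sum_le_card_nsmul _ _ _ fun i _ => hw i
    _ ≤ 1 • wmax := nsmul_le_nsmul_left hwmax hA
    _ = wmax := one_nsmul _

theorem ncard_Ioc_levelSup_mul_le [Nonempty ι] {lo hi b b' wmin wmax : ℝ}
    (hlohi : lo ≤ hi) (hbb : b' ≤ b) (hwmin : 0 ≤ wmin) (hw : ∀ i, w i ∈ Icc wmin wmax)
    (hs : Function.Injective s) :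
    ({i | P i ∧ s i ∈ Ioc (levelSup lo hi (tailWeight P s w) b)
      (levelSup lo hi (tailWeight P s w) b')}.ncard : ℝ) * wmin ≤ b - b' + wmax := by
  rw [← Finset.coe_filter_univ, Set.ncard_coe_finset]
  set T := tailWeight P s w
  set U := levelSup lo hi T b
  set U' := levelSup lo hi T b'
  set F := ({i : ι | P i ∧ s i ∈ Ioc U U'} : Finset ι)
  have hwmax : 0 ≤ wmax := hwmin.trans ((hw (Classical.arbitrary ι)).1.trans (hw _).2)
  obtain hF | ⟨i₀, hi₀⟩ := F.eq_empty_or_nonempty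
  · simp only [hF, Finset.card_empty, CharP.cast_eq_zero, zero_mul]
    linarith
  simp only [F, Finset.mem_filter_univ, mem_Ioc] at hi₀
  have hU : U ∈ Icc lo hi := levelSup_mem_Icc hlohi
  have hU' : U' ∈ Icc lo hi := levelSup_mem_Icc hlohi
  -- `x` lies just above `U` and `y` just below `U'`, with no score in `(U, x]` or in `[y, U')`.
  obtain ⟨x, hxs, hUx⟩ :=
    ((eventually_forall_lt_of_lt s U).filter_mono nhdsWithin_le_nhds |>.and
      (self_mem_nhdsWithin (s := Ioi U))).exists
  obtain ⟨y, ⟨hsy, hloy⟩, hyU'⟩ :=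
    (((eventually_forall_gt_of_gt s U').and (eventually_gt_nhds (hU.1.trans_lt
      (hi₀.2.1.trans_le hi₀.2.2)))).filter_mono nhdsWithin_le_nhds |>.and
      (self_mem_nhdsWithin (s := Iio U'))).exists
  have hxU' : x ≤ U' := (hxs i₀ hi₀.2.1).le.trans hi₀.2.2
  have hTx : T x ≤ b := le_of_levelSup_lt (hxU'.trans hU'.2) hUx
  have hTy : b' < T y := lt_of_lt_levelSup
    (tailWeight_antitone fun i => hwmin.trans (hw i).1) hloy.le hyU'
  have hcount : #F * wmin ≤ T x - T U' := by
    rw [tailWeight_sub_tailWeight hxU', ← nsmul_eq_mul]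
    refine (Finset.card_nsmul_le_sum _ _ _ fun i _ => (hw i).1).trans
      (Finset.sum_le_sum_of_subset_of_nonneg (fun i hi => ?_) fun i _ _ => hwmin.trans (hw i).1)
    simp only [F, Finset.mem_filter_univ, mem_Ioc] at hi ⊢
    exact ⟨hi.1, hxs i hi.2.1, hi.2.2⟩
  have hjump : T y - T U' ≤ wmax := tailWeight_sub_le_of_injective hs hwmax (fun i => (hw i).2)
    hyU'.le fun i hi => (hsy i hi).le
  linarith

end TailWeight

lemma gSym_update_eq_tailWeight {Ω : Type*} {m n : ℕ} (S V : Fin (n + 1) → Fin m → Ω → ℝ)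
    (l : Fin m) (lam : Fin m → ℝ) (ω : Ω) (x : ℝ) :
    gSym S V l (Function.update lam l x) ω = 1 / ((n : ℝ) + 1) *
      tailWeight (fun i => ∀ t < l, S i t ω ≤ lam t) (fun i => S i l ω) (fun i => V i l ω) x := by
  have hprefix : ∀ i, (∀ t < l, S i t ω ≤ Function.update lam l x t) ↔ ∀ t < l, S i t ω ≤ lam t :=
    fun i => forall₂_congr fun t ht => by rw [Function.update_of_ne ht.ne]
  simp only [gSym, lossFn, tailWeight, Finset.sum_filter, Function.update_self, hprefix, mul_ite,
    mul_one, mul_zero]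

lemma USym_eq_levelSup_tailWeight {Ω : Type*} {m n : ℕ} (S V : Fin (n + 1) → Fin m → Ω → ℝ)
    (lamMin lamMax : Fin m → ℝ) (l : Fin m) (lam : Fin m → ℝ) (b : ℝ) (ω : Ω) :
    USym S V lamMin lamMax l lam b ω = levelSup (lamMin l) (lamMax l)
      (tailWeight (fun i => ∀ t < l, S i t ω ≤ lam t) (fun i => S i l ω) (fun i => V i l ω))
      (((n : ℝ) + 1) * b) := by
  simp only [USym, levelSup, gSym_update_eq_tailWeight, one_div_mul_eq_div,
    lt_div_iff₀' (by positivity : (0 : ℝ) < n + 1)]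

theorem count_scores_between_levels_general
    {Ω : Type*} [MeasurableSpace Ω] (μ : Measure Ω)
    (m n : ℕ)
    (S V : Fin (n + 1) → Fin m → Ω → ℝ)
    (lamMin lamMax : Fin m → ℝ) (hΛ : ∀ j, lamMin j ≤ lamMax j)
    (Vmin Vmax : Fin m → ℝ)
    (hVbd : ∀ i j, ∀ᵐ ω ∂μ, V i j ω ∈ Icc (Vmin j) (Vmax j))
    (hdist : ∀ j : Fin m, ∀ᵐ ω ∂μ,
      ∀ i i' : Fin (n + 1), i ≠ i' → S i j ω ≠ S i' j ω)
    (hVpos : ∀ j, 0 < Vmin j)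
    (l : Fin m) (b b' : ℝ) (hbb : b' ≤ b)
    (lam : Fin m → ℝ) :
    ∀ᵐ ω ∂μ,
      (({i : Fin (n + 1) | (∀ t, t < l → S i t ω ≤ lam t) ∧
          S i l ω ∈ Ioc (USym S V lamMin lamMax l lam b ω)
            (USym S V lamMin lamMax l lam b' ω)}.ncard : ℝ))
        ≤ (b - b' + Vmax l / ((n : ℝ) + 1)) / (Vmin l / ((n : ℝ) + 1)) := by
  filter_upwards [ae_all_iff.2 fun i => hVbd i l, hdist l] with ω hV hS
  have hN : (0 : ℝ) < n + 1 := by positivity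
  have key := ncard_Ioc_levelSup_mul_le (P := fun i => ∀ t < l, S i t ω ≤ lam t) (hΛ l)
    (mul_le_mul_of_nonneg_left hbb hN.le) (hVpos l).le hV fun i i' => not_imp_not.1 (hS i i')
  rw [USym_eq_levelSup_tailWeight, USym_eq_levelSup_tailWeight,
    le_div_iff₀ (div_pos (hVpos l) hN), mul_div_assoc', div_le_iff₀ hN]
  refine key.trans_eq ?_
  field_simp

/-- Lemma: counting scores between two symmetric generalized-inverse levels.
Fix `ℓ ∈ [m]` and `β ≥ β' ≥ 0` such that a.s. `L_ℓ^{(i)}(λ^min) > β` and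
`L_ℓ^{(i)}(λ^max) ≤ β'` for all `i`.  Then for any `λ_{1:(ℓ−1)} ∈ Λ_1×…×Λ_{ℓ−1}`, a.s. the number
of indices `i` with `S_t^{(i)} ≤ λ_t` for all `t < ℓ` and
`S_ℓ^{(i)} ∈ (U_ℓ^sym(λ; β), U_ℓ^sym(λ; β')]` is at most
`(β − β' + Vmax_ℓ/(n+1)) / (Vmin_ℓ/(n+1))`. -/
theorem count_scores_between_levels
    {Ω : Type*} [MeasurableSpace Ω] (μ : Measure Ω) [IsProbabilityMeasure μ]
    (m n : ℕ) (hm : 1 ≤ m) (hn : 1 ≤ n)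
    (S V : Fin (n + 1) → Fin m → Ω → ℝ)
    (hSmeas : ∀ i j, Measurable (S i j)) (hVmeas : ∀ i j, Measurable (V i j))
    (lamMin lamMax : Fin m → ℝ) (hΛ : ∀ j, lamMin j ≤ lamMax j)
    (β : Fin m → ℝ) (hβ : ∀ j, 0 ≤ β j)
    (Vmin Vmax : Fin m → ℝ) (hVle : ∀ j, Vmin j ≤ Vmax j)
    (hVbd : ∀ i j, ∀ᵐ ω ∂μ, V i j ω ∈ Icc (Vmin j) (Vmax j))
    (hexch : ∀ π : Equiv.Perm (Fin (n + 1)),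
      Measure.map (fun ω => fun i : Fin (n + 1) =>
          ((fun j => S (π i) j ω), (fun j => V (π i) j ω))) μ
        = Measure.map (fun ω => fun i : Fin (n + 1) =>
          ((fun j => S i j ω), (fun j => V i j ω))) μ)
    (hfeas : ∀ (j : Fin m) (i : Fin (n + 1)), ∀ᵐ ω ∂μ, lossFn S V j i lamMax ω ≤ β j)
    (hdist : ∀ j : Fin m, ∀ᵐ ω ∂μ,
      ∀ i i' : Fin (n + 1), i ≠ i' → S i j ω ≠ S i' j ω)
    (hVpos : ∀ j, 0 < Vmin j)
    (l : Fin m) (b b' : ℝ) (hb' : 0 ≤ b') (hbb : b' ≤ b)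
    (hlow : ∀ i : Fin (n + 1), ∀ᵐ ω ∂μ, b < lossFn S V l i lamMin ω)
    (hup : ∀ i : Fin (n + 1), ∀ᵐ ω ∂μ, lossFn S V l i lamMax ω ≤ b')
    (lam : Fin m → ℝ) (hlam : ∀ t : Fin m, t < l → lam t ∈ Icc (lamMin t) (lamMax t)) :
    ∀ᵐ ω ∂μ,
      (({i : Fin (n + 1) | (∀ t, t < l → S i t ω ≤ lam t) ∧
          S i l ω ∈ Ioc (USym S V lamMin lamMax l lam b ω)
            (USym S V lamMin lamMax l lam b' ω)}.ncard : ℝ))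
        ≤ (b - b' + Vmax l / ((n : ℝ) + 1)) / (Vmin l / ((n : ℝ) + 1)) :=
  count_scores_between_levels_general μ m n S V lamMin lamMax hΛ Vmin Vmax hVbd hdist hVpos l b b'
    hbb lam

end
end

section
/- (Uniform perturbation bound for the population risk.) Fix j ∈ {1,…,m}, λ_{1:(j−1)} ∈ ℝ^{j−1}, and α_{1:(j−1)} ∈ ℝ^{j−1} with α_ℓ = 0 for every ℓ ∈ {1,…,j−1} ∩ D. Then sup over λ_j ∈ ℝ of |g_j^*(λ_j; λ_1 + α_1, …, λ_{j−1} + α_{j−1}) − g_j^*(λ_j; λ_1, …, λ_{j−1})| is at most Vmax_j · Σ_{ℓ ∈ {1,…,j−1} \ D} K_ℓ·|α_ℓ|. -/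
open MeasureTheory Set

attribute [local instance] Classical.propDecidable

noncomputable section

/-- The population risk `g_j^*(λ_j; λ_{1:(j−1)}) = E[L_j^{(n+1)}(λ_{1:j})]`, the expectation being
taken at the test datapoint `i = n+1`. -/
def gStar {Ω : Type*} [MeasurableSpace Ω] {m n : ℕ} (μ : Measure Ω)
    (S V : Fin (n + 1) → Fin m → Ω → ℝ) (j : Fin m) (lam : Fin m → ℝ) : ℝ :=
  ∫ ω, lossFn S V j (Fin.last n) lam ω ∂μ

/-- `U_j^*(λ_{1:(j−1)}; b) = sup{x ∈ Λ_j : g_j^*(x; λ_{1:(j−1)}) > b}`, the supremum of the empty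
set being `λ_j^min` (implemented by inserting `λ_j^min` into the set, which does not change the
supremum of a nonempty subset of `Λ_j`). -/
def UStar {Ω : Type*} [MeasurableSpace Ω] {m n : ℕ} (μ : Measure Ω)
    (S V : Fin (n + 1) → Fin m → Ω → ℝ) (lamMin lamMax : Fin m → ℝ)
    (j : Fin m) (lam : Fin m → ℝ) (b : ℝ) : ℝ :=
  sSup (insert (lamMin j)
    {x | x ∈ Icc (lamMin j) (lamMax j) ∧ b < gStar μ S V j (Function.update lam j x)})

/-!
Write `c` and `c'` for the perturbed and unperturbed threshold vectors. Both risks integrate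
`V_j` over an event of the form `{S_ℓ ≤ c_ℓ for ℓ < j, S_j > c_j}`, so their difference is at most
`Vmax_j` times the probability of the symmetric difference of the two events. A point of that
symmetric difference has some score `S_ℓ`, `ℓ < j`, between `c_ℓ` and `c'_ℓ`; this forces
`α_ℓ ≠ 0`, hence `ℓ ∉ D`, and the Lipschitz cdf bounds that probability by `K_ℓ |α_ℓ|`.
-/

open scoped symmDiff Interval

section IndicatorIntegral

variable {Ω : Type*} [MeasurableSpace Ω] {μ : Measure Ω}

theorem abs_integral_indicator_sub_indicator_le [IsFiniteMeasure μ] {W : Ω → ℝ} {c : ℝ}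
    {A B : Set Ω} (hA : MeasurableSet A) (hB : MeasurableSet B) (hW : Integrable W μ)
    (hWc : ∀ᵐ ω ∂μ, |W ω| ≤ c) :
    |∫ ω, A.indicator W ω ∂μ - ∫ ω, B.indicator W ω ∂μ| ≤ c * μ.real (A ∆ B) := by
  rw [← integral_sub (hW.indicator hA) (hW.indicator hB)]
  calc |∫ ω, (A.indicator W ω - B.indicator W ω) ∂μ|
      ≤ ∫ ω, |(A ∆ B).indicator W ω| ∂μ := by
        simp_rw [Set.abs_indicator_symmDiff]
        exact abs_integral_le_integral_abs
    _ ≤ ∫ ω, (A ∆ B).indicator (fun _ ↦ c) ω ∂μ := by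
        refine integral_mono_ae (hW.indicator (hA.symmDiff hB)).abs
          ((integrable_const c).indicator (hA.symmDiff hB)) ?_
        filter_upwards [hWc] with ω hω
        by_cases hω' : ω ∈ A ∆ B <;> simp [hω', hω]
    _ = c * μ.real (A ∆ B) := by
        rw [integral_indicator_const _ (hA.symmDiff hB), smul_eq_mul, mul_comm]

theorem measureReal_preimage_uIoc_le [IsFiniteMeasure μ] {X : Ω → ℝ} (hX : Measurable X)
    {K : ℝ} (hK : ∀ s t : ℝ, |μ.real {ω | X ω ≤ s} - μ.real {ω | X ω ≤ t}| ≤ K * |s - t|)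
    (a b : ℝ) : μ.real (X ⁻¹' Ι a b) ≤ K * |a - b| := by
  wlog hab : a ≤ b generalizing a b
  · rw [uIoc_comm, abs_sub_comm]
    exact this b a (le_of_not_ge hab)
  have hIoc : X ⁻¹' Ι a b = {ω | X ω ≤ b} \ {ω | X ω ≤ a} := by
    ext ω
    simp [uIoc_of_le hab, and_comm]
  have hsub : {ω | X ω ≤ a} ⊆ {ω | X ω ≤ b} := fun ω h ↦ le_trans h hab
  rw [hIoc, measureReal_sdiff hsub (measurableSet_le hX measurable_const), abs_sub_comm a b]
  exact (le_abs_self _).trans (hK b a)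

end IndicatorIntegral

section LossEvent

variable {Ω : Type*} {m : ℕ}

def lossEvent (T : Fin m → Ω → ℝ) (j : Fin m) (c : Fin m → ℝ) : Set Ω :=
  {ω | (∀ l, l < j → T l ω ≤ c l) ∧ c j < T j ω}

theorem lossFn_eq_indicator {n : ℕ} (S V : Fin (n + 1) → Fin m → Ω → ℝ) (j : Fin m)
    (i : Fin (n + 1)) (lam : Fin m → ℝ) :
    lossFn S V j i lam = (lossEvent (S i) j lam).indicator (V i j) := by
  ext ω
  by_cases h : ω ∈ lossEvent (S i) j lam
  · simp only [lossFn, Set.indicator_of_mem h, if_pos (show _ ∧ _ from h), mul_one]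
  · simp only [lossFn, Set.indicator_of_notMem h, if_neg (show ¬(_ ∧ _) from h), mul_zero]

theorem measurableSet_lossEvent [MeasurableSpace Ω] {T : Fin m → Ω → ℝ}
    (hT : ∀ l, Measurable (T l)) (j : Fin m) (c : Fin m → ℝ) :
    MeasurableSet (lossEvent T j c) := by
  have : lossEvent T j c = (⋂ l, ⋂ _ : l < j, {ω | T l ω ≤ c l}) ∩ {ω | c j < T j ω} := by
    ext ω
    simp [lossEvent]
  rw [this]
  exact (MeasurableSet.iInter fun l ↦ MeasurableSet.iInter fun _ ↦
    measurableSet_le (hT l) measurable_const).inter (measurableSet_lt measurable_const (hT j))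

variable {T : Fin m → Ω → ℝ} {j : Fin m} {c c' : Fin m → ℝ}

theorem exists_mem_Ioc_of_mem_lossEvent_sdiff (hj : c j = c' j) {ω : Ω}
    (hω : ω ∈ lossEvent T j c \ lossEvent T j c') : ∃ l < j, T l ω ∈ Ioc (c' l) (c l) := by
  obtain ⟨⟨hle, hlt⟩, hnot⟩ := hω
  by_contra! h
  exact hnot ⟨fun l hl ↦ not_lt.1 fun h' ↦ h l hl ⟨h', hle l hl⟩, hj ▸ hlt⟩

theorem lossEvent_symmDiff_subset (hj : c j = c' j) {F : Finset (Fin m)}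
    (hF : ∀ l < j, c l ≠ c' l → l ∈ F) :
    lossEvent T j c ∆ lossEvent T j c' ⊆ ⋃ l ∈ F, T l ⁻¹' Ι (c l) (c' l) := by
  rintro ω (hω | hω)
  · obtain ⟨l, hl, hmem⟩ := exists_mem_Ioc_of_mem_lossEvent_sdiff hj hω
    exact mem_biUnion (hF l hl (hmem.1.trans_le hmem.2).ne') (Ioc_subset_uIoc' hmem)
  · obtain ⟨l, hl, hmem⟩ := exists_mem_Ioc_of_mem_lossEvent_sdiff hj.symm hω
    exact mem_biUnion (hF l hl (hmem.1.trans_le hmem.2).ne) (Ioc_subset_uIoc hmem)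

end LossEvent

theorem population_risk_perturbation_general
    {Ω : Type*} [MeasurableSpace Ω] (μ : Measure Ω) [IsProbabilityMeasure μ]
    (m n : ℕ)
    (S V : Fin (n + 1) → Fin m → Ω → ℝ)
    (hSmeas : ∀ i j, Measurable (S i j)) (hVmeas : ∀ i j, Measurable (V i j))
    (Vmin Vmax : Fin m → ℝ) (hVmin0 : ∀ j, 0 ≤ Vmin j) (hVle : ∀ j, Vmin j ≤ Vmax j)
    (hVbd : ∀ i j, ∀ᵐ ω ∂μ, V i j ω ∈ Icc (Vmin j) (Vmax j))
    -- D ⊆ [m] is the set of discrete-score indices; the continuous scores have Lipschitz cdfs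
    (Dset : Finset (Fin m)) (K : Fin m → ℝ)
    (hK : ∀ ℓ : Fin m, ℓ ∉ Dset → ∀ s t : ℝ,
      |(μ {ω | S (Fin.last n) ℓ ω ≤ s}).toReal - (μ {ω | S (Fin.last n) ℓ ω ≤ t}).toReal|
        ≤ K ℓ * |s - t|)
    (j : Fin m) (lam α : Fin m → ℝ)
    (hα : ∀ ℓ : Fin m, ℓ < j → ℓ ∈ Dset → α ℓ = 0) :
    ∀ x : ℝ,
      |gStar μ S V j (Function.update (fun ℓ => lam ℓ + α ℓ) j x)
          - gStar μ S V j (Function.update lam j x)|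
        ≤ Vmax j * ∑ ℓ ∈ Finset.univ.filter (fun ℓ : Fin m => ℓ < j ∧ ℓ ∉ Dset),
            K ℓ * |α ℓ| := by
  intro x
  set T := S (Fin.last n)
  set c := Function.update (fun ℓ => lam ℓ + α ℓ) j x
  set c' := Function.update lam j x
  set F := Finset.univ.filter (fun ℓ : Fin m => ℓ < j ∧ ℓ ∉ Dset)
  have hc : ∀ l < j, c l = lam l + α l ∧ c' l = lam l := fun l hl ↦
    ⟨Function.update_of_ne hl.ne _ _, Function.update_of_ne hl.ne _ _⟩
  have hVmax : 0 ≤ Vmax j := (hVmin0 j).trans (hVle j)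
  have hVbd' : ∀ᵐ ω ∂μ, |V (Fin.last n) j ω| ≤ Vmax j := by
    filter_upwards [hVbd (Fin.last n) j] with ω hω
    exact abs_le.2 ⟨by linarith [hVmin0 j, hω.1], hω.2⟩
  have hcover : lossEvent T j c ∆ lossEvent T j c' ⊆ ⋃ l ∈ F, T l ⁻¹' Ι (c l) (c' l) := by
    refine lossEvent_symmDiff_subset (by simp [c, c']) fun l hl hne ↦ ?_
    refine Finset.mem_filter.2 ⟨Finset.mem_univ l, hl, fun hD ↦ hne ?_⟩
    rw [(hc l hl).1, (hc l hl).2, hα l hl hD, add_zero]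
  calc _ ≤ Vmax j * μ.real (lossEvent T j c ∆ lossEvent T j c') := by
        simpa only [gStar, lossFn_eq_indicator] using abs_integral_indicator_sub_indicator_le
          (measurableSet_lossEvent (hSmeas _) j c) (measurableSet_lossEvent (hSmeas _) j c')
          (Integrable.of_bound (hVmeas _ _).aestronglyMeasurable _ hVbd') hVbd'
    _ ≤ Vmax j * ∑ l ∈ F, μ.real (T l ⁻¹' Ι (c l) (c' l)) := by
        gcongr
        exact (measureReal_mono hcover (measure_ne_top _ _)).trans
          (measureReal_biUnion_finset_le _ _)
    _ ≤ Vmax j * ∑ l ∈ F, K l * |α l| := by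
        gcongr with l hl
        obtain ⟨hlj, hlD⟩ := (Finset.mem_filter.1 hl).2
        simpa [(hc l hlj).1, (hc l hlj).2] using
          measureReal_preimage_uIoc_le (hSmeas _ l) (hK l hlD) (c l) (c' l)

/-- Lemma: uniform perturbation bound for the population risk.  Fix `j`,
`λ_{1:(j−1)}` and a perturbation `α_{1:(j−1)}` with `α_ℓ = 0` for each discrete index `ℓ < j`.
Then, uniformly in `λ_j`,
`|g_j^*(λ_j; λ_{1:(j−1)} + α_{1:(j−1)}) − g_j^*(λ_j; λ_{1:(j−1)})|
  ≤ Vmax_j · Σ_{ℓ<j, ℓ∉D} K_ℓ·|α_ℓ|`. -/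
theorem population_risk_perturbation
    {Ω : Type*} [MeasurableSpace Ω] (μ : Measure Ω) [IsProbabilityMeasure μ]
    (m n : ℕ) (hm : 1 ≤ m) (hn : 1 ≤ n)
    (S V : Fin (n + 1) → Fin m → Ω → ℝ)
    (hSmeas : ∀ i j, Measurable (S i j)) (hVmeas : ∀ i j, Measurable (V i j))
    (Vmin Vmax : Fin m → ℝ) (hVmin0 : ∀ j, 0 ≤ Vmin j) (hVle : ∀ j, Vmin j ≤ Vmax j)
    (hVbd : ∀ i j, ∀ᵐ ω ∂μ, V i j ω ∈ Icc (Vmin j) (Vmax j))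
    -- D ⊆ [m] is the set of discrete-score indices; the continuous scores have Lipschitz cdfs
    (Dset : Finset (Fin m)) (K : Fin m → ℝ) (hKpos : ∀ ℓ, ℓ ∉ Dset → 0 < K ℓ)
    (hK : ∀ ℓ : Fin m, ℓ ∉ Dset → ∀ s t : ℝ,
      |(μ {ω | S (Fin.last n) ℓ ω ≤ s}).toReal - (μ {ω | S (Fin.last n) ℓ ω ≤ t}).toReal|
        ≤ K ℓ * |s - t|)
    (j : Fin m) (lam α : Fin m → ℝ)
    (hα : ∀ ℓ : Fin m, ℓ < j → ℓ ∈ Dset → α ℓ = 0) :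
    ∀ x : ℝ,
      |gStar μ S V j (Function.update (fun ℓ => lam ℓ + α ℓ) j x)
          - gStar μ S V j (Function.update lam j x)|
        ≤ Vmax j * ∑ ℓ ∈ Finset.univ.filter (fun ℓ : Fin m => ℓ < j ∧ ℓ ∉ Dset),
            K ℓ * |α ℓ| :=
  population_risk_perturbation_general μ m n S V hSmeas hVmeas Vmin Vmax hVmin0 hVle hVbd Dset K hK
    j lam α hα
end
end

section
/- (Reverse Hölder lower bound for the population risk.) Fix j ∈ {1,…,m} with S_j continuously distributed (j a continuous index). Then for every λ_{1:(j−1)} ∈ ∏_{ℓ=1}^{j−1} (0, B_ℓ) and all λ_j ≤ λ_j' with λ_j, λ_j' ∈ (0, B_j): g_j^*(λ_j; λ_{1:(j−1)}) − g_j^*(λ_j'; λ_{1:(j−1)}) ≥ Vmin_j · K̃_j · (λ_j' − λ_j)^ν. In particular the constant ξ_j := Vmin_j·K̃_j is strictly positive. -/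
/-!
For `x ≤ x'` the two losses differ exactly on the strip where the first `j - 1` scores pass
their thresholds and `S_j ∈ (x, x']`, so the risk gap is the integral of the cost `V_j ≥ Vmin_j`
over that strip. Complete `λ_{1:(j-1)}` to a point of the support box with `x` in coordinate `j`:
the cdf increment from `x` to `x'` in coordinate `j` is at most the probability of the part of the
strip where the later scores also lie below the completion, and the reverse Hölder hypothesis
bounds it from below by `K̃_j (x' - x)^ν`.
-/

open MeasureTheory Set

attribute [local instance] Classical.propDecidable

noncomputable section

open Function

section CdfIncrement

variable {Ω ι : Type*} [DecidableEq ι]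

theorem setOf_forall_le_update_subset (X : ι → Ω → ℝ) (s : ι → ℝ) (j : ι) (t : ℝ) :
    {ω | ∀ ℓ, X ℓ ω ≤ update s j t ℓ} ⊆
      {ω | ∀ ℓ, X ℓ ω ≤ s ℓ} ∪ {ω | (∀ ℓ ≠ j, X ℓ ω ≤ s ℓ) ∧ X j ω ∈ Ioc (s j) t} := by
  intro ω hω
  have hother : ∀ ℓ ≠ j, X ℓ ω ≤ s ℓ := fun ℓ hℓ => by simpa [hℓ] using hω ℓ
  by_cases hj : X j ω ≤ s j
  · left
    intro ℓ
    by_cases hℓ : ℓ = j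
    · exact hℓ ▸ hj
    · exact hother ℓ hℓ
  · exact Or.inr ⟨hother, not_le.mp hj, by simpa using hω j⟩

theorem measureReal_setOf_le_update_sub_le [MeasurableSpace Ω] (μ : Measure Ω) [IsFiniteMeasure μ]
    (X : ι → Ω → ℝ) (s : ι → ℝ) (j : ι) (t : ℝ) :
    μ.real {ω | ∀ ℓ, X ℓ ω ≤ update s j t ℓ} - μ.real {ω | ∀ ℓ, X ℓ ω ≤ s ℓ} ≤
      μ.real {ω | (∀ ℓ ≠ j, X ℓ ω ≤ s ℓ) ∧ X j ω ∈ Ioc (s j) t} := by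
  have := (measureReal_mono (μ := μ) (setOf_forall_le_update_subset X s j t)).trans
    (measureReal_union_le _ _)
  linarith

end CdfIncrement

theorem mul_measureReal_le_setIntegral {Ω : Type*} [MeasurableSpace Ω] {μ : Measure Ω}
    [IsFiniteMeasure μ] {f : Ω → ℝ} {c : ℝ} (s : Set Ω) (hf : Integrable f μ)
    (hc : ∀ᵐ ω ∂μ, c ≤ f ω) :
    c * μ.real s ≤ ∫ ω in s, f ω ∂μ := by
  rw [mul_comm, ← smul_eq_mul, ← setIntegral_const]
  exact setIntegral_mono_ae (integrable_const c).integrableOn hf.integrableOn hc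

theorem exists_forall_mem_Ioo_eq_of_lt {ι : Type*} [LinearOrder ι] {B lam : ι → ℝ}
    (hB : ∀ ℓ, 0 < B ℓ) {j : ι} (hlam : ∀ ℓ < j, lam ℓ ∈ Ioo 0 (B ℓ)) {x : ℝ}
    (hx : x ∈ Ioo 0 (B j)) :
    ∃ s : ι → ℝ, (∀ ℓ, s ℓ ∈ Ioo 0 (B ℓ)) ∧ s j = x ∧ ∀ ℓ < j, s ℓ = lam ℓ := by
  refine ⟨update (fun ℓ => if ℓ < j then lam ℓ else B ℓ / 2) j x, fun ℓ => ?_, update_self ..,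
    fun ℓ hℓ => by simp [update_of_ne hℓ.ne, hℓ]⟩
  rcases eq_or_ne ℓ j with rfl | hℓ
  · rwa [update_self]
  · rw [update_of_ne hℓ]
    split_ifs with hlt
    · exact hlam ℓ hlt
    · exact ⟨half_pos (hB ℓ), half_lt_self (hB ℓ)⟩

section PopulationRisk

variable {Ω : Type*} [MeasurableSpace Ω] {m n : ℕ}

theorem measurableSet_passed_and_lt {S : Fin m → Ω → ℝ} (hS : ∀ ℓ, Measurable (S ℓ))
    (j : Fin m) (lam : Fin m → ℝ) (y : ℝ) :
    MeasurableSet {ω | (∀ l < j, S l ω ≤ lam l) ∧ y < S j ω} := by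
  have hpassed : MeasurableSet {ω | ∀ l < j, S l ω ≤ lam l} := by
    simp only [ofPred_forall]
    exact .iInter fun l => .iInter fun _ => measurableSet_le (hS l) measurable_const
  exact hpassed.inter (measurableSet_lt measurable_const (hS j))

omit [MeasurableSpace Ω] in
theorem lossFn_update_eq_indicator (S V : Fin (n + 1) → Fin m → Ω → ℝ) (j : Fin m)
    (i : Fin (n + 1)) (lam : Fin m → ℝ) (y : ℝ) :
    lossFn S V j i (update lam j y) =
      {ω | (∀ l < j, S i l ω ≤ lam l) ∧ y < S i j ω}.indicator (V i j) := by
  ext ω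
  have hpassed : (∀ l < j, S i l ω ≤ update lam j y l) ↔ ∀ l < j, S i l ω ≤ lam l :=
    forall₂_congr fun l hl => by rw [update_of_ne hl.ne]
  simp only [lossFn, update_self, hpassed, indicator_apply, mem_ofPred_eq]
  split_ifs <;> simp

theorem gStar_update_eq_setIntegral (μ : Measure Ω) (S V : Fin (n + 1) → Fin m → Ω → ℝ)
    (hS : ∀ ℓ, Measurable (S (Fin.last n) ℓ)) (j : Fin m) (lam : Fin m → ℝ) (y : ℝ) :
    gStar μ S V j (update lam j y) =
      ∫ ω in {ω | (∀ l < j, S (Fin.last n) l ω ≤ lam l) ∧ y < S (Fin.last n) j ω},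
        V (Fin.last n) j ω ∂μ := by
  rw [gStar, lossFn_update_eq_indicator, integral_indicator (measurableSet_passed_and_lt hS j lam y)]

theorem gStar_update_sub_gStar_update (μ : Measure Ω) (S V : Fin (n + 1) → Fin m → Ω → ℝ)
    (hS : ∀ ℓ, Measurable (S (Fin.last n) ℓ)) (j : Fin m)
    (hV : Integrable (V (Fin.last n) j) μ) (lam : Fin m → ℝ) {x x' : ℝ} (hxx' : x ≤ x') :
    gStar μ S V j (update lam j x) - gStar μ S V j (update lam j x') =
      ∫ ω in {ω | (∀ l < j, S (Fin.last n) l ω ≤ lam l) ∧ S (Fin.last n) j ω ∈ Ioc x x'},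
        V (Fin.last n) j ω ∂μ := by
  rw [gStar_update_eq_setIntegral μ S V hS, gStar_update_eq_setIntegral μ S V hS,
    ← setIntegral_sdiff (measurableSet_passed_and_lt hS j lam x') hV.integrableOn ?_]
  · congr 2
    ext ω
    simp only [mem_sdiff, mem_ofPred_eq, mem_Ioc, not_and, not_lt]
    grind
  · exact fun ω hω => ⟨hω.1, hxx'.trans_lt hω.2⟩

end PopulationRisk

theorem population_risk_reverse_holder_general
    {Ω : Type*} [MeasurableSpace Ω] (μ : Measure Ω) [IsProbabilityMeasure μ]
    (m n : ℕ)
    (S V : Fin (n + 1) → Fin m → Ω → ℝ)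
    (hSmeas : ∀ i j, Measurable (S i j)) (hVmeas : ∀ i j, Measurable (V i j))
    (j : Fin m)
    -- bounded positive costs
    (Vmin Vmax : Fin m → ℝ) (hVpos : 0 < Vmin j)
    (hVbd : ∀ᵐ ω ∂μ, V (Fin.last n) j ω ∈ Icc (Vmin j) (Vmax j))
    -- compactly supported scores
    (B : Fin m → ℝ) (hB : ∀ ℓ, 0 < B ℓ)
    -- reverse ν-Hölder joint cdf in coordinate j
    (ν : ℝ) (Ktil : Fin m → ℝ) (hKtil : 0 < Ktil j)
    (hrev : ∀ s : Fin m → ℝ, (∀ ℓ, s ℓ ∈ Ioo 0 (B ℓ)) → ∀ s' : ℝ, s' ∈ Ioo 0 (B j) →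
      s j ≤ s' →
      Ktil j * (s' - s j) ^ ν
        ≤ (μ {ω | ∀ ℓ : Fin m, S (Fin.last n) ℓ ω ≤ Function.update s j s' ℓ}).toReal
            - (μ {ω | ∀ ℓ : Fin m, S (Fin.last n) ℓ ω ≤ s ℓ}).toReal) :
    0 < Vmin j * Ktil j ∧
    ∀ lam : Fin m → ℝ, (∀ ℓ : Fin m, ℓ < j → lam ℓ ∈ Ioo 0 (B ℓ)) →
      ∀ x x' : ℝ, x ∈ Ioo 0 (B j) → x' ∈ Ioo 0 (B j) → x ≤ x' →
        Vmin j * Ktil j * (x' - x) ^ ν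
          ≤ gStar μ S V j (Function.update lam j x)
              - gStar μ S V j (Function.update lam j x') := by
  refine ⟨mul_pos hVpos hKtil, fun lam hlam x x' hx hx' hxx' => ?_⟩
  obtain ⟨s, hs, rfl, hs_lt⟩ := exists_forall_mem_Ioo_eq_of_lt hB hlam hx
  have hstrip : {ω | (∀ ℓ ≠ j, S (Fin.last n) ℓ ω ≤ s ℓ) ∧ S (Fin.last n) j ω ∈ Ioc (s j) x'} ⊆
      {ω | (∀ l < j, S (Fin.last n) l ω ≤ lam l) ∧ S (Fin.last n) j ω ∈ Ioc (s j) x'} :=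
    fun ω ⟨hother, hj⟩ => ⟨fun l hl => hs_lt l hl ▸ hother l hl.ne, hj⟩
  have hcdf := (hrev s hs x' hx' hxx').trans
    (measureReal_setOf_le_update_sub_le μ (S (Fin.last n)) s j x')
  have hV : Integrable (V (Fin.last n) j) μ := .of_mem_Icc _ _ (hVmeas _ _).aemeasurable hVbd
  rw [gStar_update_sub_gStar_update μ S V (hSmeas _) j hV lam hxx', mul_assoc]
  calc Vmin j * (Ktil j * (x' - s j) ^ ν)
      ≤ Vmin j * μ.real {ω | (∀ l < j, S (Fin.last n) l ω ≤ lam l) ∧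
          S (Fin.last n) j ω ∈ Ioc (s j) x'} := by
        gcongr
        exact hcdf.trans (measureReal_mono hstrip)
    _ ≤ _ := mul_measureReal_le_setIntegral _ hV (hVbd.mono fun _ h => h.1)

/-- Lemma: reverse Hölder lower bound for the population risk.  Fix a
continuous index `j`.  Under bounded positive costs, compactly supported scores and a reverse
`ν`-Hölder joint cdf in coordinate `j`, for every `λ_{1:(j−1)} ∈ ∏_{ℓ<j}(0,B_ℓ)` and all
`λ_j ≤ λ_j'` in `(0,B_j)`:
`g_j^*(λ_j; λ_{1:(j−1)}) − g_j^*(λ_j'; λ_{1:(j−1)}) ≥ Vmin_j·K̃_j·(λ_j' − λ_j)^ν`, and the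
constant `ξ_j = Vmin_j·K̃_j` is strictly positive. -/
theorem population_risk_reverse_holder
    {Ω : Type*} [MeasurableSpace Ω] (μ : Measure Ω) [IsProbabilityMeasure μ]
    (m n : ℕ) (hm : 1 ≤ m) (hn : 1 ≤ n)
    (S V : Fin (n + 1) → Fin m → Ω → ℝ)
    (hSmeas : ∀ i j, Measurable (S i j)) (hVmeas : ∀ i j, Measurable (V i j))
    (j : Fin m)
    -- bounded positive costs
    (Vmin Vmax : Fin m → ℝ) (hVpos : 0 < Vmin j) (hVle : Vmin j ≤ Vmax j)
    (hVbd : ∀ᵐ ω ∂μ, V (Fin.last n) j ω ∈ Icc (Vmin j) (Vmax j))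
    -- compactly supported scores
    (B : Fin m → ℝ) (hB : ∀ ℓ, 0 < B ℓ)
    (hsupp : ∀ᵐ ω ∂μ, ∀ ℓ : Fin m, S (Fin.last n) ℓ ω ∈ Ioo 0 (B ℓ))
    -- reverse ν-Hölder joint cdf in coordinate j
    (ν : ℝ) (hν : 1 ≤ ν) (Ktil : Fin m → ℝ) (hKtil : 0 < Ktil j)
    (hrev : ∀ s : Fin m → ℝ, (∀ ℓ, s ℓ ∈ Ioo 0 (B ℓ)) → ∀ s' : ℝ, s' ∈ Ioo 0 (B j) →
      s j ≤ s' →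
      Ktil j * (s' - s j) ^ ν
        ≤ (μ {ω | ∀ ℓ : Fin m, S (Fin.last n) ℓ ω ≤ Function.update s j s' ℓ}).toReal
            - (μ {ω | ∀ ℓ : Fin m, S (Fin.last n) ℓ ω ≤ s ℓ}).toReal) :
    0 < Vmin j * Ktil j ∧
    ∀ lam : Fin m → ℝ, (∀ ℓ : Fin m, ℓ < j → lam ℓ ∈ Ioo 0 (B ℓ)) →
      ∀ x x' : ℝ, x ∈ Ioo 0 (B j) → x' ∈ Ioo 0 (B j) → x ≤ x' →
        Vmin j * Ktil j * (x' - x) ^ ν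
          ≤ gStar μ S V j (Function.update lam j x)
              - gStar μ S V j (Function.update lam j x') :=
  population_risk_reverse_holder_general μ m n S V hSmeas hVmeas j Vmin Vmax hVpos hVbd B hB ν Ktil
    hKtil hrev

end
end
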